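/- arXiv:2602.17896 — 5 statements merged into one kernel-verified Lean document; each statement's English description precedes it below -/
import Mathlib

section
/- There exist a constant C > 0 and an integer N such that for all n ≥ N and all x ∈ [0,1], |E[A_{12} | X_1 = x] − (2 r_n f(x) + (r_n^3/3) f''(x))| ≤ C r_n^5, where E[A_{12} | X_1 = x] = P(d(x, X_2) ≤ r_n). -/
open MeasureTheory ProbabilityTheory Filter Finset

noncomputable section

private lemma idw_eq {f : ℝ → ℝ} {m : ℕ} (hf : ContDiff ℝ 4 f) (hm : m ≤ 4)
    {s : Set ℝ} (hs : UniqueDiffOn ℝ s) {x : ℝ} (hx : x ∈ s) :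
    iteratedDerivWithin m f s x = iteratedDeriv m f x := by
  rw [iteratedDerivWithin_eq_iteratedFDerivWithin, iteratedDeriv_eq_iteratedFDeriv]
  have hf' : ContDiff ℝ ((4:ℕ∞) : WithTop ℕ∞) f := by exact_mod_cast hf
  exact (((contDiff_iff_ftaylorSeries.mp hf').hasFTaylorSeriesUpToOn
    s).eq_iteratedFDerivWithin_of_uniqueDiffOn (by exact_mod_cast hm) hs hx).symm ▸ rfl

private lemma taylor_est {g : ℝ → ℝ} (hg : ContDiff ℝ 4 g) {M : ℝ}
    (hM : ∀ x, |iteratedDeriv 4 g x| ≤ M) (x s : ℝ) (hs : 0 ≤ s) :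
    |g (x + s) - (g x + s * iteratedDeriv 1 g x + s ^ 2 / 2 * iteratedDeriv 2 g x
      + s ^ 3 / 6 * iteratedDeriv 3 g x)| ≤ M * s ^ 4 / 6 := by
  rcases eq_or_lt_of_le hs with h0 | h0
  · have hM0 : 0 ≤ M := le_trans (abs_nonneg _) (hM x)
    rw [← h0]; simp
  · have hx : x < x + s := by linarith
    have hud := uniqueDiffOn_Icc hx
    have ek : ∀ k : ℕ, k ≤ 4 →
        iteratedDerivWithin k g (Set.Icc x (x + s)) x = iteratedDeriv k g x :=
      fun k hk => idw_eq hg hk hud (Set.left_mem_Icc.mpr hx.le)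
    have hb := taylor_mean_remainder_bound (f := g) (a := x) (b := x + s) (n := 3) (C := M)
      hx.le (hg.contDiffOn.of_le (by norm_num)) (Set.right_mem_Icc.mpr hx.le) ?_
    · rw [taylor_within_apply] at hb
      simp only [Finset.sum_range_succ, Finset.sum_range_zero,
        ek 0 (by norm_num), ek 1 (by norm_num), ek 2 (by norm_num), ek 3 (by norm_num),
        add_sub_cancel_left, Real.norm_eq_abs, smul_eq_mul] at hb
      norm_num [Nat.factorial, iteratedDeriv_zero, iteratedDeriv_one] at hb
      rw [iteratedDeriv_one]
      exact le_trans (le_of_eq (congrArg abs (by ring))) hb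
    · intro y hy
      rw [Real.norm_eq_abs, idw_eq hg (by norm_num) hud hy]
      exact hM y

private lemma taylor_sym {g : ℝ → ℝ} (hg : ContDiff ℝ 4 g) {M : ℝ}
    (hM : ∀ x, |iteratedDeriv 4 g x| ≤ M) (x s : ℝ) (hs : 0 ≤ s) :
    |g (x + s) + g (x - s) - (2 * g x + s ^ 2 * iteratedDeriv 2 g x)| ≤ M * s ^ 4 / 3 := by
  have h1 := taylor_est hg hM x s hs
  have hG : ContDiff ℝ 4 (fun u : ℝ => g (-u)) := hg.comp (contDiff_neg)
  have hGM : ∀ u, |iteratedDeriv 4 (fun u : ℝ => g (-u)) u| ≤ M := by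
    intro u
    rw [iteratedDeriv_comp_neg]
    norm_num
    exact hM (-u)
  have h2 := taylor_est hG hGM (-x) s hs
  have e1 : ∀ k : ℕ, iteratedDeriv k (fun u : ℝ => g (-u)) (-x)
      = (-1 : ℝ) ^ k • iteratedDeriv k g x := by
    intro k; rw [iteratedDeriv_comp_neg]; norm_num
  simp only [e1, smul_eq_mul] at h2
  have hco : -x + s = -(x - s) := by ring
  rw [hco] at h2
  norm_num at h2
  have key : g (x + s) + g (x - s) - (2 * g x + s ^ 2 * iteratedDeriv 2 g x)
      = (g (x + s) - (g x + s * iteratedDeriv 1 g x + s ^ 2 / 2 * iteratedDeriv 2 g x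
          + s ^ 3 / 6 * iteratedDeriv 3 g x))
        + (g (x - s) - (g x + s * (-1) ^ 1 * iteratedDeriv 1 g x
          + s ^ 2 / 2 * ((-1) ^ 2 * iteratedDeriv 2 g x)
          + s ^ 3 / 6 * ((-1) ^ 3 * iteratedDeriv 3 g x))) := by ring
  rw [key]
  calc |_ + _| ≤ _ + _ := abs_add_le _ _
    _ ≤ M * s ^ 4 / 3 := by
        have h2' : |g (x - s) - (g x + s * (-1) ^ 1 * iteratedDeriv 1 g x
            + s ^ 2 / 2 * ((-1) ^ 2 * iteratedDeriv 2 g x)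
            + s ^ 3 / 6 * ((-1) ^ 3 * iteratedDeriv 3 g x))| ≤ M * s ^ 4 / 6 := by
          refine le_trans (le_of_eq (congrArg abs ?_)) h2
          rw [iteratedDeriv_one]; ring
        linarith

private lemma interval_est {g : ℝ → ℝ} (hg : ContDiff ℝ 4 g) {M : ℝ}
    (hM : ∀ x, |iteratedDeriv 4 g x| ≤ M) (x ρ : ℝ) (hρ : 0 ≤ ρ) :
    |(∫ t in (x - ρ)..(x + ρ), g t) - (2 * ρ * g x + ρ ^ 3 / 3 * iteratedDeriv 2 g x)|
      ≤ M / 15 * ρ ^ 5 := by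
  have hgc : Continuous g := hg.continuous
  have c1 : Continuous fun s : ℝ => g (x + s) + g (x - s) := by fun_prop
  have c2 : Continuous fun s : ℝ => 2 * g x + s ^ 2 * iteratedDeriv 2 g x := by fun_prop
  have h1 : (∫ s in (0:ℝ)..ρ, g (x + s)) = ∫ t in x..(x + ρ), g t := by
    simpa using intervalIntegral.integral_comp_add_left (a := (0:ℝ)) (b := ρ) (f := g) x
  have h2 : (∫ s in (0:ℝ)..ρ, g (x - s)) = ∫ t in (x - ρ)..x, g t := by
    simpa using intervalIntegral.integral_comp_sub_left (a := (0:ℝ)) (b := ρ) (f := g) x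
  have hadd : (∫ s in (0:ℝ)..ρ, (g (x + s) + g (x - s))) = ∫ t in (x - ρ)..(x + ρ), g t := by
    rw [intervalIntegral.integral_add
      (Continuous.intervalIntegrable (by fun_prop) _ _)
      (Continuous.intervalIntegrable (by fun_prop) _ _), h1, h2, add_comm]
    exact intervalIntegral.integral_add_adjacent_intervals
      (hgc.intervalIntegrable _ _) (hgc.intervalIntegrable _ _)
  have hpoly : (∫ s in (0:ℝ)..ρ, (2 * g x + s ^ 2 * iteratedDeriv 2 g x))
      = 2 * ρ * g x + ρ ^ 3 / 3 * iteratedDeriv 2 g x := by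
    rw [intervalIntegral.integral_add (intervalIntegrable_const)
      (Continuous.intervalIntegrable (by fun_prop) _ _),
      intervalIntegral.integral_const, intervalIntegral.integral_mul_const, integral_pow]
    simp; ring
  have hdiff : (∫ t in (x - ρ)..(x + ρ), g t)
      - (2 * ρ * g x + ρ ^ 3 / 3 * iteratedDeriv 2 g x)
      = ∫ s in (0:ℝ)..ρ, (g (x + s) + g (x - s)
          - (2 * g x + s ^ 2 * iteratedDeriv 2 g x)) := by
    rw [intervalIntegral.integral_sub (c1.intervalIntegrable _ _) (c2.intervalIntegrable _ _),
      hadd, hpoly]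
  rw [hdiff]
  have hφ : Continuous fun s : ℝ => g (x + s) + g (x - s)
      - (2 * g x + s ^ 2 * iteratedDeriv 2 g x) := c1.sub c2
  calc |∫ s in (0:ℝ)..ρ, (g (x + s) + g (x - s) - (2 * g x + s ^ 2 * iteratedDeriv 2 g x))|
      ≤ ∫ s in (0:ℝ)..ρ, |g (x + s) + g (x - s) - (2 * g x + s ^ 2 * iteratedDeriv 2 g x)| :=
        intervalIntegral.abs_integral_le_integral_abs hρ
    _ ≤ ∫ s in (0:ℝ)..ρ, M / 3 * s ^ 4 := by
        refine intervalIntegral.integral_mono_on hρ (hφ.abs.intervalIntegrable _ _)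
          ((continuous_const.mul (continuous_pow 4)).intervalIntegrable _ _) ?_
        intro s hs
        have := taylor_sym hg hM x s hs.1
        linarith
    _ = M / 15 * ρ ^ 5 := by
        rw [intervalIntegral.integral_const_mul, integral_pow]
        norm_num; ring

theorem stmt0
    (r : ℕ → ℝ) (hr : ∀ n, r n ∈ Set.Icc (0:ℝ) (1/2))
    (hr0 : Filter.Tendsto r Filter.atTop (nhds 0))
    (g : ℝ → ℝ) (hgper : Function.Periodic g 1)
    (hgpos : ∃ c > 0, ∀ x, c ≤ g x)
    (hgsmooth : ContDiff ℝ 4 g)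
    (hgbd : ∃ M, ∀ x, |iteratedDeriv 4 g x| ≤ M)
    (f : ℝ → ℝ) (hf : f = Set.indicator (Set.Icc 0 1) g)
    (hdens : ∫ x, f x = 1)
    (adj : ℕ → ℝ → ℝ → ℝ)
    (hadj : ∀ n x y, adj n x y = if min |x - y| (1 - |x - y|) ≤ r n then (1:ℝ) else 0)
    :
    ∃ C > 0, ∃ N : ℕ, ∀ n ≥ N, ∀ x ∈ Set.Icc (0:ℝ) 1,
      |(∫ y, adj n x y * f y)
        - (2 * r n * g x + (r n)^3 / 3 * iteratedDeriv 2 g x)| ≤ C * (r n)^5 := by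
  classical
  obtain ⟨M, hM⟩ := hgbd
  have hM0 : 0 ≤ M := le_trans (abs_nonneg _) (hM 0)
  refine ⟨M / 15 + 1, by linarith, 0, ?_⟩
  intro n _ x hx
  obtain ⟨hx0, hx1⟩ := hx
  obtain ⟨hρ0, hρh⟩ := hr n
  set ρ := r n with hρdef
  set S : Set ℝ := {u : ℝ | ∃ k : ℤ, |u - x - k| ≤ ρ} with hS
  set Φ : ℝ → ℝ := Set.indicator S g with hΦ
  -- Step A
  have stepA : (∫ y, adj n x y * f y) = ∫ y in (0:ℝ)..1, adj n x y * g y := by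
    have hind : ∀ y, adj n x y * f y
        = Set.indicator (Set.Icc (0:ℝ) 1) (fun y => adj n x y * g y) y := by
      intro y
      rw [hf]
      by_cases hy : y ∈ Set.Icc (0:ℝ) 1
      · rw [Set.indicator_of_mem hy, Set.indicator_of_mem hy]
      · rw [Set.indicator_of_notMem hy, Set.indicator_of_notMem hy, mul_zero]
    simp_rw [hind]
    rw [MeasureTheory.integral_indicator measurableSet_Icc,
      MeasureTheory.integral_Icc_eq_integral_Ioc,
      ← intervalIntegral.integral_of_le zero_le_one]
  -- the adjacency condition matches the periodic set on [0,1]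
  have hiff : ∀ y ∈ Set.Icc (0:ℝ) 1, (min |x - y| (1 - |x - y|) ≤ ρ ↔ y ∈ S) := by
    intro y hy
    obtain ⟨hy0, hy1⟩ := hy
    constructor
    · intro h
      rcases min_le_iff.mp h with h' | h'
      · exact ⟨0, by rw [abs_sub_comm] at h'; push_cast; simpa using h'⟩
      · rcases le_total x y with hxy | hxy
        · refine ⟨1, ?_⟩
          push_cast
          rw [abs_of_nonpos (by linarith)]
          rw [abs_of_nonpos (by linarith)] at h'
          linarith
        · refine ⟨-1, ?_⟩
          push_cast
          rw [abs_of_nonneg (by linarith)]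
          rw [abs_of_nonneg (by linarith)] at h'
          linarith
    · rintro ⟨k, hk⟩
      have hk3 : |k| ≤ 1 := by
        have h1 : |(k : ℝ)| ≤ 3/2 := by
          calc |(k : ℝ)| = |(y - x) - (y - x - k)| := by ring_nf
            _ ≤ |y - x| + |y - x - k| := abs_sub _ _
            _ ≤ 1 + 1/2 := by
                refine add_le_add ?_ (hk.trans hρh)
                rw [abs_le]; constructor <;> linarith
            _ = 3/2 := by norm_num
        have h2 : (|k| : ℝ) < 2 := by push_cast; exact h1.trans_lt (by norm_num)
        have h3 : |k| < 2 := by exact_mod_cast h2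
        omega
      obtain ⟨hkl, hku⟩ := abs_le.mp hk3
      interval_cases k
      · rw [min_le_iff]
        right
        push_cast at hk
        rw [abs_of_nonneg (by linarith)] at hk
        rcases abs_cases (x - y) with ⟨he, _⟩ | ⟨he, _⟩ <;> rw [he] <;> linarith
      · rw [min_le_iff]
        left
        push_cast at hk
        rw [abs_sub_comm]
        simpa using hk
      · rw [min_le_iff]
        right
        push_cast at hk
        rw [abs_of_nonpos (by linarith)] at hk
        rcases abs_cases (x - y) with ⟨he, _⟩ | ⟨he, _⟩ <;> rw [he] <;> linarith
  -- congruence on [0,1]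
  have hcong1 : (∫ y in (0:ℝ)..1, adj n x y * g y) = ∫ y in (0:ℝ)..1, Φ y := by
    refine intervalIntegral.integral_congr ?_
    intro y hy
    rw [Set.uIcc_of_le zero_le_one] at hy
    show adj n x y * g y = Φ y
    by_cases h : y ∈ S
    · rw [hΦ, Set.indicator_of_mem h, hadj, if_pos ((hiff y hy).mpr h), one_mul]
    · rw [hΦ, Set.indicator_of_notMem h, hadj,
        if_neg (fun hc => h ((hiff y hy).mp hc)), zero_mul]
  have hΦper : Function.Periodic Φ 1 := by
    intro t
    have hmem : t + 1 ∈ S ↔ t ∈ S := by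
      constructor
      · rintro ⟨k, hk⟩
        refine ⟨k - 1, ?_⟩
        push_cast
        convert hk using 2
        ring
      · rintro ⟨k, hk⟩
        refine ⟨k + 1, ?_⟩
        push_cast
        convert hk using 2
        ring
    by_cases h : t ∈ S
    · rw [hΦ, Set.indicator_of_mem (hmem.mpr h), Set.indicator_of_mem h, hgper t]
    · rw [hΦ, Set.indicator_of_notMem (fun hc => h (hmem.mp hc)), Set.indicator_of_notMem h]
  have stepB : (∫ y in (0:ℝ)..1, Φ y) = ∫ t in (x - 1/2)..(x - 1/2 + 1), Φ t := by
    have h := hΦper.intervalIntegral_add_eq 0 (x - 1/2)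
    rwa [zero_add] at h
  have hiff2 : Set.EqOn Φ (Set.indicator (Set.Icc (x - ρ) (x + ρ)) g)
      (Set.uIcc (x - 1/2) (x - 1/2 + 1)) := by
    intro t ht
    rw [Set.uIcc_of_le (by linarith)] at ht
    obtain ⟨ht0, ht1⟩ := ht
    have hmem : t ∈ S ↔ t ∈ Set.Icc (x - ρ) (x + ρ) := by
      rw [Set.mem_Icc]
      constructor
      · rintro ⟨k, hk⟩
        rcases eq_or_lt_of_le hρh with he | hlt
        · constructor <;> linarith
        · have hk0 : k = 0 := by
            have h1 : |(k : ℝ)| ≤ ρ + 1/2 := by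
              calc |(k : ℝ)| = |(t - x) - (t - x - k)| := by ring_nf
                _ ≤ |t - x| + |t - x - k| := abs_sub _ _
                _ ≤ 1/2 + ρ :=
                    add_le_add (abs_le.mpr ⟨by linarith, by linarith⟩) hk
                _ = ρ + 1/2 := by ring
            have h2 : (|k| : ℝ) < 1 := by push_cast; linarith
            have h3 : |k| < 1 := by exact_mod_cast h2
            rw [abs_lt] at h3
            omega
          subst hk0
          push_cast at hk
          rw [sub_zero] at hk
          obtain ⟨ha, hb⟩ := abs_le.mp hk
          exact ⟨by linarith, by linarith⟩
      · rintro ⟨h1, h2⟩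
        refine ⟨0, ?_⟩
        push_cast
        rw [sub_zero, abs_le]
        exact ⟨by linarith, by linarith⟩
    by_cases h : t ∈ S
    · rw [hΦ, Set.indicator_of_mem h, Set.indicator_of_mem (hmem.mp h)]
    · rw [hΦ, Set.indicator_of_notMem h,
        Set.indicator_of_notMem (fun hc => h (hmem.mpr hc))]
  have stepC : (∫ t in (x - 1/2)..(x - 1/2 + 1), Φ t) = ∫ t in (x - ρ)..(x + ρ), g t := by
    rw [intervalIntegral.integral_congr hiff2,
      intervalIntegral.integral_of_le (by linarith : x - 1/2 ≤ x - 1/2 + 1),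
      MeasureTheory.setIntegral_indicator measurableSet_Icc]
    have hset : ((Set.Ioc (x - 1/2) (x - 1/2 + 1) ∩ Set.Icc (x - ρ) (x + ρ) : Set ℝ))
        =ᵐ[volume] Set.Ioc (x - ρ) (x + ρ) := by
      have h0 : ∀ᵐ t : ℝ ∂volume, t ∉ ({x - ρ} : Set ℝ) :=
        MeasureTheory.measure_eq_zero_iff_ae_notMem.mp (measure_singleton _)
      rw [Filter.eventuallyEq_set]
      filter_upwards [h0] with t ht
      simp only [Set.mem_inter_iff, Set.mem_Ioc, Set.mem_Icc, Set.mem_singleton_iff] at *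
      constructor
      · rintro ⟨⟨_, _⟩, h3, h4⟩
        exact ⟨lt_of_le_of_ne h3 (Ne.symm ht), h4⟩
      · rintro ⟨h1, h2⟩
        exact ⟨⟨by linarith, by linarith⟩, h1.le, h2⟩
    rw [MeasureTheory.setIntegral_congr_set hset,
      ← intervalIntegral.integral_of_le (by linarith : x - ρ ≤ x + ρ)]
  rw [stepA, hcong1, stepB, stepC]
  have hest := interval_est hgsmooth hM x ρ hρ0
  have h5 : (0:ℝ) ≤ ρ ^ 5 := by positivity
  exact hest.trans (by nlinarith)
end
end

section
/- There exist a constant C > 0 and an integer N such that for all n ≥ N and all x ∈ [0,1], |E[A_{12} A_{13} | X_1 = x] − (4 r_n^2 f(x)^2 + (4 r_n^4/3) f(x) f''(x))| ≤ C r_n^6, where E[A_{12} A_{13} | X_1 = x] = P(d(x, X_2) ≤ r_n)·P(d(x, X_3) ≤ r_n). -/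
open MeasureTheory ProbabilityTheory Filter Finset

noncomputable section

/-- A periodic function has periodic derivative. -/
lemma periodic_deriv_aux {g : ℝ → ℝ} (h : Function.Periodic g 1) :
    Function.Periodic (deriv g) 1 := by
  intro x
  have hg : (fun y => g (y + 1)) = g := funext h
  calc deriv g (x + 1) = deriv (fun y => g (y + 1)) x := (deriv_comp_add_const g 1 x).symm
    _ = deriv g x := by rw [hg]

/-- FTC-based iterated bound. -/
lemma ftc_bound {h h' : ℝ → ℝ} {K : ℝ} {k : ℕ}
    (hd : ∀ t, HasDerivAt h (h' t) t) (hc : Continuous h') (h0 : h 0 = 0)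
    (hb : ∀ t, 0 ≤ t → |h' t| ≤ K * t ^ k) :
    ∀ t, 0 ≤ t → |h t| ≤ K * t ^ (k + 1) := by
  have hK : 0 ≤ K := by
    have := hb 1 zero_le_one
    simpa using (abs_nonneg (h' 1)).trans this
  intro t ht
  have hint : IntervalIntegrable h' MeasureTheory.volume 0 t := hc.intervalIntegrable 0 t
  have heq : h t = ∫ s in (0:ℝ)..t, h' s := by
    rw [intervalIntegral.integral_eq_sub_of_hasDerivAt (fun s _ => hd s) hint, h0, sub_zero]
  rw [heq]
  have h1 : |∫ s in (0:ℝ)..t, h' s| ≤ ∫ s in (0:ℝ)..t, |h' s| :=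
    intervalIntegral.abs_integral_le_integral_abs ht
  have h2 : (∫ s in (0:ℝ)..t, |h' s|) ≤ ∫ s in (0:ℝ)..t, K * s ^ k := by
    apply intervalIntegral.integral_mono_on ht (hc.abs.intervalIntegrable 0 t)
      ((continuous_const.mul (continuous_pow k)).intervalIntegrable 0 t)
    intro s hs; exact hb s hs.1
  have h3 : (∫ s in (0:ℝ)..t, K * s ^ k) = K * (t ^ (k + 1) / (k + 1)) := by
    rw [intervalIntegral.integral_const_mul, integral_pow]
    norm_num
  have h4 : K * (t ^ (k + 1) / (k + 1)) ≤ K * t ^ (k + 1) := by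
    apply mul_le_mul_of_nonneg_left _ hK
    apply div_le_self (pow_nonneg ht _)
    exact le_add_of_nonneg_left (Nat.cast_nonneg k)
  linarith

/-- The circle-neighborhood integral equals an interval integral of the periodic density. -/
lemma circ_integral (g : ℝ → ℝ) (hgper : Function.Periodic g 1) (hgc : Continuous g)
    {x ρ : ℝ} (hx0 : 0 ≤ x) (hx1 : x ≤ 1) (hρ0 : 0 ≤ ρ) (hρ : ρ < 1/2) :
    (∫ y, (if min |x - y| (1 - |x - y|) ≤ ρ then (1:ℝ) else 0)
        * (Set.Icc (0:ℝ) 1).indicator g y)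
      = ∫ y in (x - ρ)..(x + ρ), g y := by
  set I : Set ℝ := Set.Icc (x - ρ) (x + ρ) with hI
  set G : ℝ → ℝ := I.indicator g with hG
  have hGint : MeasureTheory.Integrable G :=
    (hgc.integrableOn_Icc).integrable_indicator measurableSet_Icc
  have hmemI : ∀ y : ℝ, y ∈ I ↔ x - ρ ≤ y ∧ y ≤ x + ρ := by
    intro y; rw [hI, Set.mem_Icc]
  have hpt : ∀ y, (if min |x - y| (1 - |x - y|) ≤ ρ then (1:ℝ) else 0)
      * (Set.Icc (0:ℝ) 1).indicator g y
      = (Set.Icc (0:ℝ) 1).indicator (fun y => G y + G (y + 1) + G (y - 1)) y := by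
    intro y
    by_cases hy : y ∈ Set.Icc (0:ℝ) 1
    · rw [Set.indicator_of_mem hy, Set.indicator_of_mem hy]
      obtain ⟨hy0, hy1⟩ := hy
      have hiff : y ∈ I ↔ |x - y| ≤ ρ := by
        rw [hmemI, abs_le]
        constructor <;> rintro ⟨a, b⟩ <;> constructor <;> linarith
      by_cases h0 : |x - y| ≤ ρ
      · obtain ⟨ha, hb⟩ := abs_le.mp h0
        have m0 : y ∈ I := hiff.mpr h0
        have mp : y + 1 ∉ I := by
          intro hmem; rw [hmemI] at hmem; obtain ⟨_, h2⟩ := hmem; linarith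
        have mm : y - 1 ∉ I := by
          intro hmem; rw [hmemI] at hmem; obtain ⟨h2, _⟩ := hmem; linarith
        rw [if_pos ((min_le_left _ _).trans h0), one_mul, hG,
          Set.indicator_of_mem m0, Set.indicator_of_notMem mp, Set.indicator_of_notMem mm]
        ring
      · by_cases h1 : 1 - |x - y| ≤ ρ
        · have hcond : min |x - y| (1 - |x - y|) ≤ ρ := (min_le_right _ _).trans h1
          have m0 : y ∉ I := fun hmem => h0 (hiff.mp hmem)
          rcases le_or_gt y x with hle | hlt
          · have habs : |x - y| = x - y := abs_of_nonneg (by linarith)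
            have hge : 1 - ρ ≤ x - y := by rw [habs] at h1; linarith
            have mp : y + 1 ∈ I := by rw [hmemI]; constructor <;> linarith
            have mm : y - 1 ∉ I := by
              intro hmem; rw [hmemI] at hmem; obtain ⟨h2, _⟩ := hmem; linarith
            have hgp : g (y + 1) = g y := hgper y
            rw [if_pos hcond, one_mul, hG, Set.indicator_of_notMem m0,
              Set.indicator_of_mem mp, Set.indicator_of_notMem mm, hgp]
            ring
          · have habs : |x - y| = -(x - y) := abs_of_neg (by linarith)
            have hge : 1 - ρ ≤ y - x := by rw [habs] at h1; linarith
            have mm : y - 1 ∈ I := by rw [hmemI]; constructor <;> linarith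
            have mp : y + 1 ∉ I := by
              intro hmem; rw [hmemI] at hmem; obtain ⟨_, h2⟩ := hmem; linarith
            have hg1 : g (y - 1) = g y := by
              have h2 := hgper (y - 1); simpa using h2.symm
            rw [if_pos hcond, one_mul, hG, Set.indicator_of_notMem m0,
              Set.indicator_of_notMem mp, Set.indicator_of_mem mm, hg1]
            ring
        · have hcond : ¬ min |x - y| (1 - |x - y|) ≤ ρ := by
            rw [min_le_iff]; tauto
          have m0 : y ∉ I := fun hmem => h0 (hiff.mp hmem)
          have mp : y + 1 ∉ I := by
            intro hmem; rw [hmemI] at hmem; obtain ⟨_, h2⟩ := hmem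
            have h3 := le_abs_self (x - y); push_neg at h1; linarith
          have mm : y - 1 ∉ I := by
            intro hmem; rw [hmemI] at hmem; obtain ⟨h2, _⟩ := hmem
            have h3 := neg_abs_le (x - y); push_neg at h1; linarith
          rw [if_neg hcond, zero_mul, hG, Set.indicator_of_notMem m0,
            Set.indicator_of_notMem mp, Set.indicator_of_notMem mm]
          ring
    · rw [Set.indicator_of_notMem hy, Set.indicator_of_notMem hy, mul_zero]
  simp only [hpt]
  rw [MeasureTheory.integral_indicator measurableSet_Icc]
  have i1 : MeasureTheory.IntegrableOn (fun y => G y) (Set.Icc (0:ℝ) 1) := hGint.integrableOn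
  have i2 : MeasureTheory.IntegrableOn (fun y => G (y + 1)) (Set.Icc (0:ℝ) 1) :=
    (hGint.comp_add_right 1).integrableOn
  have i3 : MeasureTheory.IntegrableOn (fun y => G (y - 1)) (Set.Icc (0:ℝ) 1) :=
    (hGint.comp_sub_right 1).integrableOn
  have i12 : MeasureTheory.IntegrableOn (fun y => G y + G (y + 1)) (Set.Icc (0:ℝ) 1) :=
    i1.add i2
  rw [MeasureTheory.integral_add i12 i3, MeasureTheory.integral_add i1 i2]
  have icc_eq : ∀ F : ℝ → ℝ, (∫ y in Set.Icc (0:ℝ) 1, F y) = ∫ y in (0:ℝ)..1, F y := by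
    intro F
    rw [intervalIntegral.integral_of_le (by norm_num : (0:ℝ) ≤ 1),
      MeasureTheory.integral_Icc_eq_integral_Ioc]
  rw [icc_eq, icc_eq, icc_eq,
    intervalIntegral.integral_comp_add_right (fun y => G y) 1,
    intervalIntegral.integral_comp_sub_right (fun y => G y) 1]
  norm_num
  have hint : ∀ a b : ℝ, IntervalIntegrable G MeasureTheory.volume a b := fun a b =>
    hGint.intervalIntegrable
  have hadd1 : (∫ y in (0:ℝ)..1, G y) + (∫ y in (1:ℝ)..2, G y) = ∫ y in (0:ℝ)..2, G y :=
    intervalIntegral.integral_add_adjacent_intervals (hint 0 1) (hint 1 2)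
  have hadd2 : (∫ y in (-1:ℝ)..0, G y) + (∫ y in (0:ℝ)..2, G y) = ∫ y in (-1:ℝ)..2, G y :=
    intervalIntegral.integral_add_adjacent_intervals (hint (-1) 0) (hint 0 2)
  have hsub : Set.Icc (x - ρ) (x + ρ) ⊆ Set.Ioc (-1 : ℝ) 2 := by
    intro y hy
    rw [Set.mem_Icc] at hy
    simp only [Set.mem_Ioc]
    constructor <;> linarith [hy.1, hy.2]
  have hfin : (∫ y in (-1:ℝ)..2, G y) = ∫ y in (x - ρ)..(x + ρ), g y := by
    rw [intervalIntegral.integral_of_le (by norm_num : (-1:ℝ) ≤ 2), hG,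
      MeasureTheory.setIntegral_indicator measurableSet_Icc,
      Set.inter_eq_self_of_subset_right hsub,
      intervalIntegral.integral_of_le (by linarith : x - ρ ≤ x + ρ),
      ← MeasureTheory.integral_Icc_eq_integral_Ioc]
  linarith [hadd1, hadd2, hfin]

/-- Taylor-type bound for the symmetric interval integral. -/
lemma taylor_bound (g : ℝ → ℝ) (hg : ContDiff ℝ 4 g) {M : ℝ}
    (hM : ∀ y, |iteratedDeriv 4 g y| ≤ M) (x : ℝ) {ρ : ℝ} (hρ : 0 ≤ ρ) :
    |(∫ y in (x - ρ)..(x + ρ), g y)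
        - (2 * ρ * g x + ρ ^ 3 / 3 * iteratedDeriv 2 g x)| ≤ 2 * M * ρ ^ 5 := by
  have dstep : ∀ m : ℕ, m < 4 →
      ∀ y, HasDerivAt (iteratedDeriv m g) (iteratedDeriv (m + 1) g y) y := by
    intro m hm y
    have hd : DifferentiableAt ℝ (iteratedDeriv m g) y :=
      (hg.differentiable_iteratedDeriv m (by exact_mod_cast hm)).differentiableAt
    have h2 := hd.hasDerivAt
    rwa [← iteratedDeriv_succ] at h2
  have cstep : ∀ m : ℕ, m ≤ 4 → Continuous (iteratedDeriv m g) := fun m hm =>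
    hg.continuous_iteratedDeriv m (by exact_mod_cast hm)
  have hg0 : ∀ y, HasDerivAt g (iteratedDeriv 1 g y) y := by
    intro y
    have h2 := dstep 0 (by norm_num) y
    rwa [iteratedDeriv_zero] at h2
  have hgc : Continuous g := hg.continuous
  have ccomp : ∀ m : ℕ, m ≤ 4 → Continuous (fun t : ℝ => iteratedDeriv m g (x + t)) := by
    intro m hm
    exact (cstep m hm).comp (continuous_const.add continuous_id)
  have ccomp' : ∀ m : ℕ, m ≤ 4 → Continuous (fun t : ℝ => iteratedDeriv m g (x - t)) := by
    intro m hm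
    exact (cstep m hm).comp (continuous_const.sub continuous_id)
  -- chain of error functions
  set e3 : ℝ → ℝ := fun t => iteratedDeriv 3 g (x + t) + -(iteratedDeriv 3 g (x - t)) with he3
  set e2 : ℝ → ℝ := fun t =>
    iteratedDeriv 2 g (x + t) + iteratedDeriv 2 g (x - t) - 2 * iteratedDeriv 2 g x with he2
  set e1 : ℝ → ℝ := fun t =>
    iteratedDeriv 1 g (x + t) + -(iteratedDeriv 1 g (x - t)) - t * (2 * iteratedDeriv 2 g x)
    with he1
  set e0 : ℝ → ℝ := fun t =>
    g (x + t) + g (x - t) - t ^ 2 * iteratedDeriv 2 g x - 2 * g x with he0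
  have d3 : ∀ t, HasDerivAt e3
      (iteratedDeriv 4 g (x + t) + -(-(iteratedDeriv 4 g (x - t)))) t := by
    intro t
    exact ((dstep 3 (by norm_num) (x + t)).comp_const_add x t).add
      (((dstep 3 (by norm_num) (x - t)).comp_const_sub x t).neg)
  have c4 : Continuous (fun t : ℝ => iteratedDeriv 4 g (x + t) + -(-(iteratedDeriv 4 g (x - t)))) :=
    (ccomp 4 le_rfl).add ((ccomp' 4 le_rfl).neg.neg)
  have b3 : ∀ t, 0 ≤ t → |e3 t| ≤ (2 * M) * t ^ (0 + 1) := by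
    apply ftc_bound d3 c4
    · simp [he3]
    · intro t ht
      simp only [neg_neg, pow_zero, mul_one]
      exact (abs_add_le _ _).trans (by linarith [hM (x + t), hM (x - t)])
  have c3 : Continuous e3 := by
    rw [he3]; exact (ccomp 3 (by norm_num)).add (ccomp' 3 (by norm_num)).neg
  have d2 : ∀ t, HasDerivAt e2 (e3 t) t := by
    intro t
    exact (((dstep 2 (by norm_num) (x + t)).comp_const_add x t).add
      ((dstep 2 (by norm_num) (x - t)).comp_const_sub x t)).sub_const (2 * iteratedDeriv 2 g x)
  have b2 : ∀ t, 0 ≤ t → |e2 t| ≤ (2 * M) * t ^ (0 + 1 + 1) :=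
    ftc_bound d2 c3 (by simp [he2]; ring) b3
  have c2 : Continuous e2 := by
    rw [he2]
    exact (((ccomp 2 (by norm_num)).add (ccomp' 2 (by norm_num)))).sub continuous_const
  have d1 : ∀ t, HasDerivAt e1 (e2 t) t := by
    intro t
    have h := (((dstep 1 (by norm_num) (x + t)).comp_const_add x t).add
      (((dstep 1 (by norm_num) (x - t)).comp_const_sub x t).neg)).sub
      ((hasDerivAt_id t).mul_const (2 * iteratedDeriv 2 g x))
    have heq : iteratedDeriv 2 g (x + t) + -(-(iteratedDeriv 2 g (x - t)))
        - 1 * (2 * iteratedDeriv 2 g x) = e2 t := by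
      simp only [he2]; ring
    rwa [heq] at h
  have b1 : ∀ t, 0 ≤ t → |e1 t| ≤ (2 * M) * t ^ (0 + 1 + 1 + 1) :=
    ftc_bound d1 c2 (by simp [he1]) b2
  have c1 : Continuous e1 := by
    rw [he1]
    exact ((ccomp 1 (by norm_num)).add (ccomp' 1 (by norm_num)).neg).sub
      (continuous_id.mul continuous_const)
  have d0 : ∀ t, HasDerivAt e0 (e1 t) t := by
    intro t
    have h := (((hg0 (x + t)).comp_const_add x t).add
      ((hg0 (x - t)).comp_const_sub x t)).sub
      ((hasDerivAt_pow 2 t).mul_const (iteratedDeriv 2 g x))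
    have h2 := h.sub_const (2 * g x)
    have heq : iteratedDeriv 1 g (x + t) + -(iteratedDeriv 1 g (x - t))
        - (2 : ℕ) * t ^ (2 - 1) * iteratedDeriv 2 g x = e1 t := by
      simp only [he1]; push_cast; ring
    rwa [heq] at h2
  have b0 : ∀ t, 0 ≤ t → |e0 t| ≤ (2 * M) * t ^ (0 + 1 + 1 + 1 + 1) :=
    ftc_bound d0 c1 (by simp [he0]; ring) b1
  have c0 : Continuous e0 := by
    rw [he0]
    exact (((hgc.comp (continuous_const.add continuous_id)).add
      (hgc.comp (continuous_const.sub continuous_id))).sub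
      ((continuous_pow 2).mul continuous_const)).sub continuous_const
  -- global error function of ρ
  have hci : Continuous (fun t : ℝ => g (x + t) + g (x - t)) :=
    (hgc.comp (continuous_const.add continuous_id)).add
      (hgc.comp (continuous_const.sub continuous_id))
  set H : ℝ → ℝ := fun u =>
    (∫ t in (0:ℝ)..u, (g (x + t) + g (x - t)))
      - (2 * u * g x + u ^ 3 / 3 * iteratedDeriv 2 g x) with hH
  have dH : ∀ u, HasDerivAt H (e0 u) u := by
    intro u
    have hint := (hci.integral_hasStrictDerivAt 0 u).hasDerivAt
    have hpoly : HasDerivAt (fun u : ℝ => 2 * u * g x + u ^ 3 / 3 * iteratedDeriv 2 g x)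
        (2 * 1 * g x + (3 : ℕ) * u ^ (3 - 1) / 3 * iteratedDeriv 2 g x) u := by
      exact (((hasDerivAt_id u).const_mul 2).mul_const (g x)).add
        (((hasDerivAt_pow 3 u).div_const 3).mul_const (iteratedDeriv 2 g x))
    have h := hint.sub hpoly
    have heq : g (x + u) + g (x - u)
        - (2 * 1 * g x + (3 : ℕ) * u ^ (3 - 1) / 3 * iteratedDeriv 2 g x) = e0 u := by
      simp only [he0]; push_cast; ring
    rwa [heq] at h
  have bH : ∀ u, 0 ≤ u → |H u| ≤ (2 * M) * u ^ (0 + 1 + 1 + 1 + 1 + 1) :=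
    ftc_bound dH c0 (by simp [hH]) b0
  have hval : H ρ = (∫ y in (x - ρ)..(x + ρ), g y)
      - (2 * ρ * g x + ρ ^ 3 / 3 * iteratedDeriv 2 g x) := by
    simp only [hH]
    have hia : IntervalIntegrable (fun t => g (x + t)) MeasureTheory.volume 0 ρ :=
      (hgc.comp (continuous_const.add continuous_id)).intervalIntegrable 0 ρ
    have hib : IntervalIntegrable (fun t => g (x - t)) MeasureTheory.volume 0 ρ :=
      (hgc.comp (continuous_const.sub continuous_id)).intervalIntegrable 0 ρ
    rw [intervalIntegral.integral_add hia hib]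
    have h1 : (∫ t in (0:ℝ)..ρ, g (x + t)) = ∫ y in (x + 0)..(x + ρ), g y :=
      intervalIntegral.integral_comp_add_left g x
    have h2 : (∫ t in (0:ℝ)..ρ, g (x - t)) = ∫ y in (x - ρ)..(x - 0), g y :=
      intervalIntegral.integral_comp_sub_left g x
    rw [h1, h2]
    have h3 : (∫ y in (x - ρ)..(x + ρ), g y)
        = (∫ y in (x - ρ)..x, g y) + ∫ y in x..(x + ρ), g y :=
      (intervalIntegral.integral_add_adjacent_intervals
        (hgc.intervalIntegrable _ _) (hgc.intervalIntegrable _ _)).symm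
    rw [h3]
    norm_num
    ring
  have := bH ρ hρ
  rw [hval] at this
  norm_num at this ⊢
  linarith

set_option maxHeartbeats 1000000

theorem stmt1
    (r : ℕ → ℝ) (hr : ∀ n, r n ∈ Set.Icc (0:ℝ) (1/2))
    (hr0 : Filter.Tendsto r Filter.atTop (nhds 0))
    (g : ℝ → ℝ) (hgper : Function.Periodic g 1)
    (hgpos : ∃ c > 0, ∀ x, c ≤ g x)
    (hgsmooth : ContDiff ℝ 4 g)
    (hgbd : ∃ M, ∀ x, |iteratedDeriv 4 g x| ≤ M)
    (f : ℝ → ℝ) (hf : f = Set.indicator (Set.Icc 0 1) g)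
    (hdens : ∫ x, f x = 1)
    (adj : ℕ → ℝ → ℝ → ℝ)
    (hadj : ∀ n x y, adj n x y = if min |x - y| (1 - |x - y|) ≤ r n then (1:ℝ) else 0)
    :
    ∃ C > 0, ∃ N : ℕ, ∀ n ≥ N, ∀ x ∈ Set.Icc (0:ℝ) 1,
      |(∫ y, ∫ z, adj n x y * adj n x z * (f y * f z))
        - (4 * (r n)^2 * (g x)^2 + 4 * (r n)^4 / 3 * g x * iteratedDeriv 2 g x)|
        ≤ C * (r n)^6 := by
  obtain ⟨M, hM⟩ := hgbd
  have hM0 : 0 ≤ M := (abs_nonneg _).trans (hM 0)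
  have hgc : Continuous g := hgsmooth.continuous
  -- bound on g
  have hB1 : ∃ B1 : ℝ, 0 ≤ B1 ∧ ∀ y, |g y| ≤ B1 := by
    obtain ⟨C, hC⟩ := isBounded_iff_forall_norm_le.mp
      (hgper.isBounded_of_continuous one_ne_zero hgc)
    refine ⟨C, (abs_nonneg (g 0)).trans ?_, fun y => hC _ (Set.mem_range_self y)⟩
    exact hC _ (Set.mem_range_self 0)
  obtain ⟨B1, hB1nn, hB1⟩ := hB1
  -- bound on the second derivative
  have hper2 : Function.Periodic (iteratedDeriv 2 g) 1 := by
    have h1 : iteratedDeriv 2 g = deriv (deriv g) := by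
      rw [iteratedDeriv_succ, iteratedDeriv_one]
    rw [h1]
    exact periodic_deriv_aux (periodic_deriv_aux hgper)
  have hc2 : Continuous (iteratedDeriv 2 g) :=
    hgsmooth.continuous_iteratedDeriv 2 (by norm_num)
  have hB2 : ∃ B2 : ℝ, 0 ≤ B2 ∧ ∀ y, |iteratedDeriv 2 g y| ≤ B2 := by
    obtain ⟨C, hC⟩ := isBounded_iff_forall_norm_le.mp
      (hper2.isBounded_of_continuous one_ne_zero hc2)
    refine ⟨C, (abs_nonneg (iteratedDeriv 2 g 0)).trans ?_,
      fun y => hC _ (Set.mem_range_self y)⟩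
    exact hC _ (Set.mem_range_self 0)
  obtain ⟨B2, hB2nn, hB2⟩ := hB2
  -- choose N
  have hev : ∀ᶠ n in Filter.atTop, r n < 1/4 :=
    hr0.eventually_lt_const (by norm_num : (0:ℝ) < 1/4)
  obtain ⟨N, hN⟩ := Filter.eventually_atTop.mp hev
  refine ⟨B2 ^ 2 + 4 * M * (2 * B1 + B2) + 4 * M ^ 2 + 1, by positivity, N, ?_⟩
  intro n hn x hx
  obtain ⟨hx0, hx1⟩ := hx
  have hrn0 : 0 ≤ r n := (hr n).1
  have hrn14 : r n < 1/4 := hN n hn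
  have hrn12 : r n < 1/2 := by linarith
  have hrn1 : r n ≤ 1 := by linarith
  -- factor the double integral
  have hsplit : (∫ y, ∫ z, adj n x y * adj n x z * (f y * f z))
      = (∫ y, adj n x y * f y) * (∫ z, adj n x z * f z) := by
    have h1 : ∀ y, (∫ z, adj n x y * adj n x z * (f y * f z))
        = (adj n x y * f y) * ∫ z, adj n x z * f z := by
      intro y
      have h2 : (fun z => adj n x y * adj n x z * (f y * f z))
          = fun z => (adj n x y * f y) * (adj n x z * f z) := by
        funext z; ring
      rw [h2, MeasureTheory.integral_const_mul]
    simp only [h1]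
    rw [MeasureTheory.integral_mul_const]
  -- value of the single integral
  have hone : (∫ y, adj n x y * f y) = ∫ y in (x - r n)..(x + r n), g y := by
    have h2 : (fun y => adj n x y * f y)
        = fun y => (if min |x - y| (1 - |x - y|) ≤ r n then (1:ℝ) else 0)
          * (Set.Icc (0:ℝ) 1).indicator g y := by
      funext y; rw [hadj, hf]
    rw [h2]
    exact circ_integral g hgper hgc hx0 hx1 hrn0 hrn12
  rw [hsplit, hone]
  set S : ℝ := ∫ y in (x - r n)..(x + r n), g y with hS
  have hT := taylor_bound g hgsmooth hM x hrn0
  rw [← hS] at hT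
  set P : ℝ := 2 * r n * g x + (r n) ^ 3 / 3 * iteratedDeriv 2 g x with hP
  set E : ℝ := S - P with hE
  have hSPE : S = P + E := by rw [hE]; ring
  have hEb : |E| ≤ 2 * M * (r n) ^ 5 := hT
  -- algebraic expansion
  have hexp : S * S - (4 * (r n)^2 * (g x)^2 + 4 * (r n)^4 / 3 * g x * iteratedDeriv 2 g x)
      = (r n) ^ 6 / 9 * (iteratedDeriv 2 g x) ^ 2 + 2 * P * E + E ^ 2 := by
    rw [hSPE, hP]; ring
  rw [hexp]
  have hPb : |P| ≤ r n * (2 * B1 + B2) := by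
    have h1 : |P| ≤ |2 * r n * g x| + |(r n) ^ 3 / 3 * iteratedDeriv 2 g x| := abs_add_le _ _
    have h2 : |2 * r n * g x| = 2 * r n * |g x| := by
      rw [abs_mul, abs_of_nonneg (by linarith : (0:ℝ) ≤ 2 * r n)]
    have h3 : |(r n) ^ 3 / 3 * iteratedDeriv 2 g x|
        = (r n) ^ 3 / 3 * |iteratedDeriv 2 g x| := by
      rw [abs_mul, abs_of_nonneg (by positivity : (0:ℝ) ≤ (r n) ^ 3 / 3)]
    have h4 : 2 * r n * |g x| ≤ 2 * r n * B1 :=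
      mul_le_mul_of_nonneg_left (hB1 x) (by linarith)
    have h5 : (r n) ^ 3 / 3 * |iteratedDeriv 2 g x| ≤ (r n) ^ 3 / 3 * B2 :=
      mul_le_mul_of_nonneg_left (hB2 x) (by positivity)
    have h6 : (r n) ^ 3 ≤ r n := by nlinarith
    nlinarith
  have habs1 : |(r n) ^ 6 / 9 * (iteratedDeriv 2 g x) ^ 2 + 2 * P * E + E ^ 2|
      ≤ |(r n) ^ 6 / 9 * (iteratedDeriv 2 g x) ^ 2| + |2 * P * E| + |E ^ 2| := by
    calc |(r n) ^ 6 / 9 * (iteratedDeriv 2 g x) ^ 2 + 2 * P * E + E ^ 2|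
        ≤ |(r n) ^ 6 / 9 * (iteratedDeriv 2 g x) ^ 2 + 2 * P * E| + |E ^ 2| := abs_add_le _ _
      _ ≤ |(r n) ^ 6 / 9 * (iteratedDeriv 2 g x) ^ 2| + |2 * P * E| + |E ^ 2| := by
          linarith [abs_add_le ((r n) ^ 6 / 9 * (iteratedDeriv 2 g x) ^ 2) (2 * P * E)]
  have ht1 : |(r n) ^ 6 / 9 * (iteratedDeriv 2 g x) ^ 2| ≤ (r n) ^ 6 * B2 ^ 2 := by
    rw [abs_mul, abs_of_nonneg (by positivity : (0:ℝ) ≤ (r n) ^ 6 / 9), abs_pow, sq_abs]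
    have h1 : (iteratedDeriv 2 g x) ^ 2 ≤ B2 ^ 2 := by
      have := hB2 x; nlinarith [abs_nonneg (iteratedDeriv 2 g x), neg_abs_le (iteratedDeriv 2 g x), le_abs_self (iteratedDeriv 2 g x)]
    nlinarith [pow_nonneg hrn0 6]
  have ht2 : |2 * P * E| ≤ 4 * M * (2 * B1 + B2) * (r n) ^ 6 := by
    rw [abs_mul, abs_mul, abs_two]
    have h1 : |P| * |E| ≤ (r n * (2 * B1 + B2)) * (2 * M * (r n) ^ 5) :=
      mul_le_mul hPb hEb (abs_nonneg _) (by positivity)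
    nlinarith [abs_nonneg P, abs_nonneg E]
  have ht3 : |E ^ 2| ≤ 4 * M ^ 2 * (r n) ^ 6 := by
    rw [abs_pow]
    have h1 : |E| ^ 2 ≤ (2 * M * (r n) ^ 5) ^ 2 := by
      nlinarith [abs_nonneg E]
    have h2 : ((r n) ^ 5) ^ 2 ≤ (r n) ^ 6 := by
      have : (r n) ^ 10 ≤ (r n) ^ 6 := pow_le_pow_of_le_one hrn0 hrn1 (by norm_num)
      calc ((r n) ^ 5) ^ 2 = (r n) ^ 10 := by ring
        _ ≤ (r n) ^ 6 := this
    nlinarith [pow_nonneg hrn0 5, sq_nonneg (r n)]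
  calc |(r n) ^ 6 / 9 * (iteratedDeriv 2 g x) ^ 2 + 2 * P * E + E ^ 2|
      ≤ |(r n) ^ 6 / 9 * (iteratedDeriv 2 g x) ^ 2| + |2 * P * E| + |E ^ 2| := habs1
    _ ≤ (r n) ^ 6 * B2 ^ 2 + 4 * M * (2 * B1 + B2) * (r n) ^ 6 + 4 * M ^ 2 * (r n) ^ 6 := by
        linarith
    _ ≤ (B2 ^ 2 + 4 * M * (2 * B1 + B2) + 4 * M ^ 2 + 1) * (r n) ^ 6 := by
        nlinarith [pow_nonneg hrn0 6]
end
end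

section
/- There exist a constant C > 0 and an integer N such that for all n ≥ N and all x ∈ [0,1], |E[A_{12} A_{23} | X_1 = x] − (4 r_n^2 f(x)^2 + (r_n^4/3)[4 (f'(x))^2 + 6 f(x) f''(x)])| ≤ C r_n^6, where E[A_{12} A_{23} | X_1 = x] = E[1[d(x, X_2) ≤ r_n]·1[d(X_2, X_3) ≤ r_n]]. -/
open MeasureTheory ProbabilityTheory Filter Finset

open intervalIntegral

noncomputable section

-- shift lemma for periodic functions
lemma per_shift (h : ℝ → ℝ) (hp : Function.Periodic h 1) (a b : ℝ) :
    ∫ t in (a+1)..(b+1), h t = ∫ t in a..b, h t := by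
  rw [← intervalIntegral.integral_comp_add_right (f := h) (a := a) (b := b) 1]
  exact intervalIntegral.integral_congr fun t _ => hp t

-- periodicity of iterated derivatives
lemma per_deriv (h : ℝ → ℝ) (hp : Function.Periodic h 1) :
    Function.Periodic (deriv h) 1 := by
  intro y
  have h1 : (fun t => h (t + 1)) = h := funext fun t => hp t
  calc deriv h (y + 1) = deriv (fun t => h (t + 1)) y := (deriv_comp_add_const h 1 y).symm
  _ = deriv h y := by rw [h1]

lemma per_iter (h : ℝ → ℝ) (hp : Function.Periodic h 1) (k : ℕ) :
    Function.Periodic (iteratedDeriv k h) 1 := by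
  induction k with
  | zero => simpa [iteratedDeriv_zero]
  | succ n ih => rw [iteratedDeriv_succ]; exact per_deriv _ ih

-- bound for continuous periodic function
lemma per_bound (u : ℝ → ℝ) (hc : Continuous u) (hp : Function.Periodic u 1) :
    ∃ B, 0 ≤ B ∧ ∀ x, |u x| ≤ B := by
  obtain ⟨z, _, hmax⟩ := isCompact_Icc.exists_isMaxOn (Set.nonempty_Icc.2 zero_le_one)
    (hc.abs.continuousOn (s := Set.Icc (0:ℝ) 1))
  refine ⟨|u z|, abs_nonneg _, fun x => ?_⟩
  have h2 := hp.sub_int_mul_eq (x := x) ⌊x⌋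
  have h1 : u x = u (Int.fract x) := by
    rw [Int.fract]; rw [← h2]; norm_num
  rw [h1]
  exact hmax ⟨Int.fract_nonneg x, (Int.fract_lt_one x).le⟩

lemma aux_mvt (u v : ℝ → ℝ) (hu : ∀ s, HasDerivAt u (v s) s) (h0 : u 0 = 0)
    {K : ℝ} (hK0 : 0 ≤ K) {k : ℕ} (hK : ∀ s, |v s| ≤ K * |s| ^ k) (t : ℝ) :
    |u t| ≤ K * |t| ^ (k + 1) := by
  have habs : ∀ s ∈ Set.uIcc (0:ℝ) t, |s| ≤ |t| := by
    intro s hs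
    rcases Set.mem_uIcc.mp hs with ⟨h1, h2⟩ | ⟨h1, h2⟩ <;> rw [abs_le] <;>
      constructor <;> linarith [le_abs_self t, neg_abs_le t]
  have key := Convex.norm_image_sub_le_of_norm_deriv_le (f := u) (C := K * |t| ^ k)
    (s := Set.uIcc (0:ℝ) t) (fun y _ => (hu y).differentiableAt)
    (fun y hy => by
      rw [Real.norm_eq_abs, (hu y).deriv]
      exact (hK y).trans (mul_le_mul_of_nonneg_left (pow_le_pow_left₀ (abs_nonneg y) (habs y hy) k) hK0))
    (convex_uIcc 0 t) Set.left_mem_uIcc Set.right_mem_uIcc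
  rw [h0, sub_zero, sub_zero, Real.norm_eq_abs, Real.norm_eq_abs] at key
  calc |u t| ≤ K * |t| ^ k * |t| := key
  _ = K * |t| ^ (k + 1) := by rw [pow_succ]; ring

lemma taylor_pt (h : ℝ → ℝ) (hh : ContDiff ℝ 4 h) {M : ℝ}
    (hM : ∀ x, |iteratedDeriv 4 h x| ≤ M) (w : ℝ) (t : ℝ) :
    |h (w + t) - h w - t * iteratedDeriv 1 h w - t^2 * (iteratedDeriv 2 h w / 2)
      - t^3 * (iteratedDeriv 3 h w / 6)| ≤ M * |t| ^ 4 := by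
  have hM0 : 0 ≤ M := (abs_nonneg _).trans (hM 0)
  have hD : ∀ k : ℕ, k < 4 → ∀ s : ℝ,
      HasDerivAt (fun y => iteratedDeriv k h (w + y)) (iteratedDeriv (k+1) h (w + s)) s := by
    intro k hk s
    have hdk : Differentiable ℝ (iteratedDeriv k h) :=
      hh.differentiable_iteratedDeriv k (by exact_mod_cast hk)
    have h1 : HasDerivAt (iteratedDeriv k h) (iteratedDeriv (k+1) h (w+s)) (w+s) := by
      rw [iteratedDeriv_succ]
      exact (hdk (w+s)).hasDerivAt
    exact h1.comp_const_add w s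
  set u3 : ℝ → ℝ := fun t => iteratedDeriv 3 h (w+t) - iteratedDeriv 3 h w with hu3def
  have hu3 : ∀ t, HasDerivAt u3 (iteratedDeriv 4 h (w+t)) t :=
    fun t => (hD 3 (by norm_num) t).sub_const _
  have b3 : ∀ t, |u3 t| ≤ M * |t| ^ 1 :=
    aux_mvt u3 _ hu3 (by simp [hu3def]) hM0 (fun s => by simpa using hM (w+s))
  set u2 : ℝ → ℝ := fun t => iteratedDeriv 2 h (w+t) - iteratedDeriv 2 h w
      - t * iteratedDeriv 3 h w with hu2def
  have hu2 : ∀ t, HasDerivAt u2 (u3 t) t := by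
    intro t
    have H := ((hD 2 (by norm_num) t).sub_const (iteratedDeriv 2 h w)).sub
      ((hasDerivAt_id t).mul_const (iteratedDeriv 3 h w))
    refine H.congr_deriv ?_
    simp [hu3def]
  have b2 : ∀ t, |u2 t| ≤ M * |t| ^ 2 :=
    aux_mvt u2 u3 hu2 (by simp [hu2def]) hM0 b3
  set u1 : ℝ → ℝ := fun t => iteratedDeriv 1 h (w+t) - iteratedDeriv 1 h w
      - t * iteratedDeriv 2 h w - t^2 * (iteratedDeriv 3 h w / 2) with hu1def
  have hu1 : ∀ t, HasDerivAt u1 (u2 t) t := by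
    intro t
    have H := (((hD 1 (by norm_num) t).sub_const (iteratedDeriv 1 h w)).sub
      ((hasDerivAt_id t).mul_const (iteratedDeriv 2 h w))).sub
      ((hasDerivAt_pow 2 t).mul_const (iteratedDeriv 3 h w / 2))
    refine H.congr_deriv ?_
    simp [hu2def]; ring
  have b1 : ∀ t, |u1 t| ≤ M * |t| ^ 3 :=
    aux_mvt u1 u2 hu1 (by simp [hu1def]) hM0 b2
  set u0 : ℝ → ℝ := fun t => h (w+t) - h w - t * iteratedDeriv 1 h w
      - t^2 * (iteratedDeriv 2 h w / 2) - t^3 * (iteratedDeriv 3 h w / 6) with hu0def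
  have hu0 : ∀ t, HasDerivAt u0 (u1 t) t := by
    intro t
    have H0 : HasDerivAt (fun y => h (w + y)) (iteratedDeriv 1 h (w + t)) t := by
      have := hD 0 (by norm_num) t
      simpa [iteratedDeriv_zero] using this
    have H := (((H0.sub_const (h w)).sub
      ((hasDerivAt_id t).mul_const (iteratedDeriv 1 h w))).sub
      ((hasDerivAt_pow 2 t).mul_const (iteratedDeriv 2 h w / 2))).sub
      ((hasDerivAt_pow 3 t).mul_const (iteratedDeriv 3 h w / 6))
    refine H.congr_deriv ?_
    simp [hu1def]; ring
  have b0 : ∀ t, |u0 t| ≤ M * |t| ^ 4 :=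
    aux_mvt u0 u1 hu0 (by simp [hu0def]) hM0 b1
  simpa [hu0def] using b0 t

lemma taylor4 (h : ℝ → ℝ) (hh : ContDiff ℝ 4 h) {M : ℝ}
    (hM : ∀ x, |iteratedDeriv 4 h x| ≤ M) (w r : ℝ) (hr : 0 ≤ r) :
    |(∫ t in (w - r)..(w + r), h t)
      - (2 * r * h w + r ^ 3 / 3 * iteratedDeriv 2 h w)| ≤ 2 * M * r ^ 5 := by
  have hM0 : 0 ≤ M := (abs_nonneg _).trans (hM 0)
  have hcont : Continuous h := hh.continuous
  set u0 : ℝ → ℝ := fun t => h (w+t) - h w - t * iteratedDeriv 1 h w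
      - t^2 * (iteratedDeriv 2 h w / 2) - t^3 * (iteratedDeriv 3 h w / 6) with hu0def
  have hu0c : Continuous u0 := by
    apply Continuous.sub; apply Continuous.sub; apply Continuous.sub; apply Continuous.sub
    · exact hcont.comp (continuous_const.add continuous_id)
    · exact continuous_const
    · exact continuous_id.mul continuous_const
    · exact (continuous_pow 2).mul continuous_const
    · exact (continuous_pow 3).mul continuous_const
  have hcomp : (∫ t in (w - r)..(w + r), h t) = ∫ t in (-r)..r, h (w + t) := by
    rw [intervalIntegral.integral_comp_add_left (f := h) (d := w)]
    rw [show w + -r = w - r by ring]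
  have hII : ∀ (v : ℝ → ℝ), Continuous v → IntervalIntegrable v volume (-r) r :=
    fun v hv => hv.intervalIntegrable _ _
  have hsplit : (∫ t in (-r)..r, h (w + t))
      = (∫ t in (-r)..r, u0 t) + (2 * r * h w + r ^ 3 / 3 * iteratedDeriv 2 h w) := by
    have hEq : ∀ t : ℝ, h (w + t) = u0 t + (h w + t * iteratedDeriv 1 h w
        + t^2 * (iteratedDeriv 2 h w / 2) + t^3 * (iteratedDeriv 3 h w / 6)) := by
      intro t; simp only [hu0def]; ring
    rw [intervalIntegral.integral_congr (g := fun t => u0 t + (h w + t * iteratedDeriv 1 h w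
        + t^2 * (iteratedDeriv 2 h w / 2) + t^3 * (iteratedDeriv 3 h w / 6)))
        (fun t _ => hEq t)]
    have c0 : Continuous fun _ : ℝ => h w := continuous_const
    have c1 : Continuous fun t : ℝ => t * iteratedDeriv 1 h w := continuous_id.mul continuous_const
    have c2 : Continuous fun t : ℝ => t^2 * (iteratedDeriv 2 h w / 2) :=
      (continuous_pow 2).mul continuous_const
    have c3 : Continuous fun t : ℝ => t^3 * (iteratedDeriv 3 h w / 6) :=
      (continuous_pow 3).mul continuous_const
    rw [intervalIntegral.integral_add (hII _ hu0c)
      (hII (fun t => h w + t * iteratedDeriv 1 h w + t^2 * (iteratedDeriv 2 h w / 2) + t^3 * (iteratedDeriv 3 h w / 6)) (((c0.add c1).add c2).add c3))]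
    congr 1
    rw [intervalIntegral.integral_add (hII (fun t => h w + t * iteratedDeriv 1 h w + t^2 * (iteratedDeriv 2 h w / 2)) ((c0.add c1).add c2)) (hII _ c3)]
    rw [intervalIntegral.integral_add (hII (fun t => h w + t * iteratedDeriv 1 h w) (c0.add c1)) (hII _ c2)]
    rw [intervalIntegral.integral_add (hII _ c0) (hII _ c1)]
    rw [intervalIntegral.integral_const]
    rw [intervalIntegral.integral_mul_const, intervalIntegral.integral_mul_const,
        intervalIntegral.integral_mul_const]
    rw [integral_id, integral_pow, integral_pow]
    simp only [smul_eq_mul]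
    push_cast
    ring
  have hbound : |∫ t in (-r)..r, u0 t| ≤ (M * r ^ 4) * |r - (-r)| := by
    have := intervalIntegral.norm_integral_le_of_norm_le_const (a := -r) (b := r)
      (C := M * r ^ 4) (f := u0) ?_
    · simpa using this
    · intro t ht
      rw [Set.uIoc_of_le (by linarith)] at ht
      have h1 : |t| ≤ r := by
        rw [abs_le]; exact ⟨ht.1.le, ht.2⟩
      have h2 : |u0 t| ≤ M * |t| ^ 4 := by
        simpa [hu0def] using taylor_pt h hh hM w t
      rw [Real.norm_eq_abs]
      exact h2.trans (mul_le_mul_of_nonneg_left (pow_le_pow_left₀ (abs_nonneg t) h1 4) hM0)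
  rw [hcomp, hsplit]
  rw [add_sub_cancel_right]
  calc |∫ t in (-r)..r, u0 t| ≤ (M * r ^ 4) * |r - (-r)| := hbound
  _ = 2 * M * r ^ 5 := by
    rw [show r - (-r) = 2 * r by ring, abs_of_nonneg (by linarith)]
    ring

lemma taylor2 (h : ℝ → ℝ) (hh : ContDiff ℝ 2 h) {M : ℝ}
    (hM : ∀ x, |iteratedDeriv 2 h x| ≤ M) (w r : ℝ) (hr : 0 ≤ r) :
    |(∫ t in (w - r)..(w + r), h t) - 2 * r * h w| ≤ 2 * M * r ^ 3 := by
  have hM0 : 0 ≤ M := (abs_nonneg _).trans (hM 0)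
  have hcont : Continuous h := hh.continuous
  have hD : ∀ k : ℕ, k < 2 → ∀ s : ℝ,
      HasDerivAt (fun y => iteratedDeriv k h (w + y)) (iteratedDeriv (k+1) h (w + s)) s := by
    intro k hk s
    have hdk : Differentiable ℝ (iteratedDeriv k h) :=
      hh.differentiable_iteratedDeriv k (by exact_mod_cast hk)
    have h1 : HasDerivAt (iteratedDeriv k h) (iteratedDeriv (k+1) h (w+s)) (w+s) := by
      rw [iteratedDeriv_succ]
      exact (hdk (w+s)).hasDerivAt
    exact h1.comp_const_add w s
  set u1 : ℝ → ℝ := fun t => iteratedDeriv 1 h (w+t) - iteratedDeriv 1 h w with hu1def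
  have hu1 : ∀ t, HasDerivAt u1 (iteratedDeriv 2 h (w+t)) t :=
    fun t => (hD 1 (by norm_num) t).sub_const _
  have b1 : ∀ t, |u1 t| ≤ M * |t| ^ 1 :=
    aux_mvt u1 _ hu1 (by simp [hu1def]) hM0 (fun s => by simpa using hM (w+s))
  set u0 : ℝ → ℝ := fun t => h (w+t) - h w - t * iteratedDeriv 1 h w with hu0def
  have hu0 : ∀ t, HasDerivAt u0 (u1 t) t := by
    intro t
    have H0 : HasDerivAt (fun y => h (w + y)) (iteratedDeriv 1 h (w + t)) t := by
      have := hD 0 (by norm_num) t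
      simpa [iteratedDeriv_zero] using this
    have H := (H0.sub_const (h w)).sub ((hasDerivAt_id t).mul_const (iteratedDeriv 1 h w))
    refine H.congr_deriv ?_
    simp [hu1def]
  have b0 : ∀ t, |u0 t| ≤ M * |t| ^ 2 :=
    aux_mvt u0 u1 hu0 (by simp [hu0def]) hM0 b1
  have hu0c : Continuous u0 := by
    apply Continuous.sub; apply Continuous.sub
    · exact hcont.comp (continuous_const.add continuous_id)
    · exact continuous_const
    · exact continuous_id.mul continuous_const
  have hII : ∀ (v : ℝ → ℝ), Continuous v → IntervalIntegrable v volume (-r) r :=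
    fun v hv => hv.intervalIntegrable _ _
  have hcomp : (∫ t in (w - r)..(w + r), h t) = ∫ t in (-r)..r, h (w + t) := by
    rw [intervalIntegral.integral_comp_add_left (f := h) (d := w)]
    rw [show w + -r = w - r by ring]
  have hsplit : (∫ t in (-r)..r, h (w + t))
      = (∫ t in (-r)..r, u0 t) + 2 * r * h w := by
    have hEq : ∀ t : ℝ, h (w + t) = u0 t + (h w + t * iteratedDeriv 1 h w) := by
      intro t; simp only [hu0def]; ring
    rw [intervalIntegral.integral_congr (g := fun t => u0 t + (h w + t * iteratedDeriv 1 h w))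
        (fun t _ => hEq t)]
    have c0 : Continuous fun _ : ℝ => h w := continuous_const
    have c1 : Continuous fun t : ℝ => t * iteratedDeriv 1 h w := continuous_id.mul continuous_const
    rw [intervalIntegral.integral_add (hII _ hu0c) (hII (fun t => h w + t * iteratedDeriv 1 h w) (c0.add c1))]
    congr 1
    rw [intervalIntegral.integral_add (hII _ c0) (hII _ c1)]
    rw [intervalIntegral.integral_const, intervalIntegral.integral_mul_const, integral_id]
    simp only [smul_eq_mul]
    ring
  have hbound : |∫ t in (-r)..r, u0 t| ≤ (M * r ^ 2) * |r - (-r)| := by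
    have := intervalIntegral.norm_integral_le_of_norm_le_const (a := -r) (b := r)
      (C := M * r ^ 2) (f := u0) ?_
    · simpa using this
    · intro t ht
      rw [Set.uIoc_of_le (by linarith)] at ht
      have h1 : |t| ≤ r := by rw [abs_le]; exact ⟨ht.1.le, ht.2⟩
      rw [Real.norm_eq_abs]
      exact (b0 t).trans (mul_le_mul_of_nonneg_left (pow_le_pow_left₀ (abs_nonneg t) h1 2) hM0)
  rw [hcomp, hsplit, add_sub_cancel_right]
  calc |∫ t in (-r)..r, u0 t| ≤ (M * r ^ 2) * |r - (-r)| := hbound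
  _ = 2 * M * r ^ 3 := by
    rw [show r - (-r) = 2 * r by ring, abs_of_nonneg (by linarith)]
    ring

lemma reduce (h : ℝ → ℝ) (hc : Continuous h) (hp : Function.Periodic h 1)
    {s : ℝ} (hs0 : 0 ≤ s) (hs2 : s ≤ 1/2) {x : ℝ} (hx0 : 0 ≤ x) (hx1 : x ≤ 1) :
    (∫ z, (if min |x - z| (1 - |x - z|) ≤ s then (1:ℝ) else 0)
        * Set.indicator (Set.Icc 0 1) h z)
      = ∫ t in (x - s)..(x + s), h t := by
  have hII : ∀ a b : ℝ, IntervalIntegrable h volume a b := fun a b => hc.intervalIntegrable a b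
  have hIcc : ∀ a b : ℝ, a ≤ b → (∫ z in Set.Icc a b, h z) = ∫ t in a..b, h t := by
    intro a b hab
    rw [intervalIntegral.integral_of_le hab, MeasureTheory.integral_Icc_eq_integral_Ioc]
  set V : Set ℝ := {z | min |x - z| (1 - |x - z|) ≤ s} ∩ Set.Icc 0 1 with hVdef
  have hmemV : ∀ z, z ∈ V ↔ ((|x - z| ≤ s ∨ 1 - |x - z| ≤ s) ∧ (0 ≤ z ∧ z ≤ 1)) := by
    intro z
    simp [hVdef, Set.mem_setOf_eq, min_le_iff]
  have step0 : (fun z => (if min |x - z| (1 - |x - z|) ≤ s then (1:ℝ) else 0)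
      * Set.indicator (Set.Icc 0 1) h z) = Set.indicator V h := by
    funext z
    rw [Set.indicator_apply, Set.indicator_apply]
    by_cases h1 : min |x - z| (1 - |x - z|) ≤ s <;> by_cases h2 : z ∈ Set.Icc (0:ℝ) 1
    · rw [if_pos h1, if_pos h2, if_pos (show z ∈ V from ⟨h1, h2⟩), one_mul]
    · rw [if_pos h1, if_neg h2, if_neg (fun hz : z ∈ V => h2 hz.2), mul_zero]
    · rw [if_neg h1, if_neg (fun hz : z ∈ V => h1 hz.1), zero_mul]
    · rw [if_neg h1, if_neg (fun hz : z ∈ V => h1 hz.1), zero_mul]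
  have hVmeas : MeasurableSet V := by
    apply MeasurableSet.inter _ measurableSet_Icc
    have : IsClosed {z : ℝ | min |x - z| (1 - |x - z|) ≤ s} := by
      apply isClosed_le _ continuous_const
      fun_prop
    exact this.measurableSet
  rw [step0, MeasureTheory.integral_indicator hVmeas]
  have hshift := per_shift h hp
  rcases le_or_gt x s with hxs | hxs
  · -- left wrap case : x ≤ s
    have hV : V = Set.Icc 0 (x + s) ∪ Set.Icc (x + 1 - s) 1 := by
      ext z
      rw [hmemV z]
      simp only [Set.mem_union, Set.mem_Icc]
      constructor
      · rintro ⟨hmin | hmin, hz0, hz1⟩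
        · rcases abs_cases (x - z) with ⟨he, hsgn⟩ | ⟨he, hsgn⟩ <;> rw [he] at hmin <;>
            exact Or.inl ⟨hz0, by linarith⟩
        · rcases abs_cases (x - z) with ⟨he, hsgn⟩ | ⟨he, hsgn⟩ <;> rw [he] at hmin
          · exact Or.inl ⟨hz0, by linarith⟩
          · exact Or.inr ⟨by linarith, hz1⟩
      · rintro (⟨hz0, hz1⟩ | ⟨hz0, hz1⟩)
        · refine ⟨Or.inl ?_, hz0, by linarith⟩
          rcases abs_cases (x - z) with ⟨he, hsgn⟩ | ⟨he, hsgn⟩ <;> rw [he] <;> linarith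
        · refine ⟨Or.inr ?_, by linarith, hz1⟩
          rcases abs_cases (x - z) with ⟨he, hsgn⟩ | ⟨he, hsgn⟩ <;> rw [he] <;> linarith

    rw [hV]
    have hdisj : AEDisjoint volume (Set.Icc 0 (x + s)) (Set.Icc (x + 1 - s) 1) := by
      have hsub : Set.Icc 0 (x + s) ∩ Set.Icc (x + 1 - s) 1 ⊆ Set.Icc (x + 1 - s) (x + s) := by
        rintro z ⟨⟨hz0, hz1⟩, ⟨hz2, hz3⟩⟩
        exact ⟨hz2, hz1⟩
      apply measure_mono_null hsub
      rw [Real.volume_Icc]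
      exact ENNReal.ofReal_eq_zero.2 (by linarith)
    rw [MeasureTheory.integral_union_ae hdisj measurableSet_Icc.nullMeasurableSet
      (hc.integrableOn_Icc) (hc.integrableOn_Icc)]
    rw [hIcc 0 (x + s) (by linarith), hIcc (x + 1 - s) 1 (by linarith)]
    have e2 : (∫ t in (x + 1 - s)..1, h t) = ∫ t in (x - s)..0, h t := by
      have := hshift (x - s) 0
      rw [show x - s + 1 = x + 1 - s by ring, zero_add] at this
      exact this
    rw [e2, add_comm]
    exact intervalIntegral.integral_add_adjacent_intervals (hII _ _) (hII _ _)
  · rcases le_or_gt (1 - s) x with hx1s | hx1s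
    · -- right wrap case : 1 - s ≤ x < means x > s
      have hV : V = Set.Icc 0 (x - 1 + s) ∪ Set.Icc (x - s) 1 := by
        ext z
        rw [hmemV z]
        simp only [Set.mem_union, Set.mem_Icc]
        constructor
        · rintro ⟨hmin | hmin, hz0, hz1⟩
          · rcases abs_cases (x - z) with ⟨he, hsgn⟩ | ⟨he, hsgn⟩ <;> rw [he] at hmin <;>
              exact Or.inr ⟨by linarith, hz1⟩
          · rcases abs_cases (x - z) with ⟨he, hsgn⟩ | ⟨he, hsgn⟩ <;> rw [he] at hmin
            · exact Or.inl ⟨hz0, by linarith⟩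
            · exact absurd hz1 (by push_neg; linarith)
        · rintro (⟨hz0, hz1⟩ | ⟨hz0, hz1⟩)
          · refine ⟨Or.inr ?_, hz0, by linarith⟩
            rcases abs_cases (x - z) with ⟨he, hsgn⟩ | ⟨he, hsgn⟩ <;> rw [he] <;> linarith
          · refine ⟨Or.inl ?_, by linarith, hz1⟩
            rcases abs_cases (x - z) with ⟨he, hsgn⟩ | ⟨he, hsgn⟩ <;> rw [he] <;> linarith
  
      rw [hV]
      have hdisj : AEDisjoint volume (Set.Icc 0 (x - 1 + s)) (Set.Icc (x - s) 1) := by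
        have hsub : Set.Icc 0 (x - 1 + s) ∩ Set.Icc (x - s) 1 ⊆ Set.Icc (x - s) (x - 1 + s) := by
          rintro z ⟨⟨hz0, hz1⟩, ⟨hz2, hz3⟩⟩
          exact ⟨hz2, hz1⟩
        apply measure_mono_null hsub
        rw [Real.volume_Icc]
        exact ENNReal.ofReal_eq_zero.2 (by linarith)
      rw [MeasureTheory.integral_union_ae hdisj measurableSet_Icc.nullMeasurableSet
        (hc.integrableOn_Icc) (hc.integrableOn_Icc)]
      rw [hIcc 0 (x - 1 + s) (by linarith), hIcc (x - s) 1 (by linarith)]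
      have e1 : (∫ t in (0:ℝ)..(x - 1 + s), h t) = ∫ t in (1:ℝ)..(x + s), h t := by
        have := hshift 0 (x - 1 + s)
        rw [show x - 1 + s + 1 = x + s by ring, zero_add] at this
        exact this.symm
      rw [e1, add_comm]
      exact intervalIntegral.integral_add_adjacent_intervals (hII _ _) (hII _ _)
    · -- middle case : s < x < 1 - s
      have hV : V = Set.Icc (x - s) (x + s) := by
        ext z
        rw [hmemV z]
        simp only [Set.mem_Icc]
        constructor
        · rintro ⟨hmin | hmin, hz0, hz1⟩
          · rcases abs_cases (x - z) with ⟨he, hsgn⟩ | ⟨he, hsgn⟩ <;> rw [he] at hmin <;>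
              exact ⟨by linarith, by linarith⟩
          · rcases abs_cases (x - z) with ⟨he, hsgn⟩ | ⟨he, hsgn⟩ <;> rw [he] at hmin
            · exact absurd hz0 (by push_neg; linarith)
            · exact absurd hz1 (by push_neg; linarith)
        · rintro ⟨hz0, hz1⟩
          refine ⟨Or.inl ?_, by linarith, by linarith⟩
          rcases abs_cases (x - z) with ⟨he, hsgn⟩ | ⟨he, hsgn⟩ <;> rw [he] <;> linarith
  
      rw [hV]
      exact hIcc _ _ (by linarith)

lemma iter_two (q : ℝ → ℝ) : iteratedDeriv 2 q = deriv (deriv q) := by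
  rw [show (2:ℕ) = 1 + 1 from rfl, iteratedDeriv_succ, iteratedDeriv_one]

lemma iter_add_two (g : ℝ → ℝ) (j : ℕ) :
    iteratedDeriv j (iteratedDeriv 2 g) = iteratedDeriv (j + 2) g := by
  induction j with
  | zero => simp
  | succ n ih =>
    rw [iteratedDeriv_succ, ih, ← iteratedDeriv_succ]

lemma prod_bound (u v : ℝ → ℝ) (n : ℕ) (hu : ContDiff ℝ (n : ℕ) u) (hv : ContDiff ℝ (n : ℕ) v)
    (B : ℝ) (hub : ∀ i ≤ n, ∀ x, |iteratedDeriv i u x| ≤ B)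
    (hvb : ∀ i ≤ n, ∀ x, |iteratedDeriv i v x| ≤ B) (x : ℝ) :
    |iteratedDeriv n (fun y => u y * v y) x| ≤ 2 ^ n * B ^ 2 := by
  have hB0 : 0 ≤ B := (abs_nonneg _).trans (hub 0 (Nat.zero_le n) x)
  have key := norm_iteratedFDeriv_mul_le (𝕜 := ℝ) hu hv x (le_refl (n : WithTop ℕ∞))
  rw [← Real.norm_eq_abs, ← norm_iteratedFDeriv_eq_norm_iteratedDeriv]
  refine key.trans ?_
  have hterm : ∀ i ∈ Finset.range (n + 1),
      (n.choose i : ℝ) * ‖iteratedFDeriv ℝ i u x‖ * ‖iteratedFDeriv ℝ (n - i) v x‖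
        ≤ (n.choose i : ℝ) * (B * B) := by
    intro i hi
    have hi' : i ≤ n := Nat.lt_succ_iff.mp (Finset.mem_range.mp hi)
    have h1 : ‖iteratedFDeriv ℝ i u x‖ ≤ B := by
      rw [norm_iteratedFDeriv_eq_norm_iteratedDeriv, Real.norm_eq_abs]
      exact hub i hi' x
    have h2 : ‖iteratedFDeriv ℝ (n - i) v x‖ ≤ B := by
      rw [norm_iteratedFDeriv_eq_norm_iteratedDeriv, Real.norm_eq_abs]
      exact hvb (n - i) (Nat.sub_le n i) x
    calc (n.choose i : ℝ) * ‖iteratedFDeriv ℝ i u x‖ * ‖iteratedFDeriv ℝ (n - i) v x‖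
        ≤ (n.choose i : ℝ) * B * B := by
          apply mul_le_mul _ h2 (norm_nonneg _) (by positivity)
          exact mul_le_mul_of_nonneg_left h1 (by positivity)
    _ = (n.choose i : ℝ) * (B * B) := by ring
  refine (Finset.sum_le_sum hterm).trans ?_
  rw [← Finset.sum_mul]
  have : (∑ i ∈ Finset.range (n + 1), (n.choose i : ℝ)) = 2 ^ n := by
    rw [← Nat.cast_sum]
    rw [Nat.sum_range_choose]
    push_cast
    ring
  rw [this]
  have : B * B = B ^ 2 := by ring
  rw [this]

lemma iter2_sq (g : ℝ → ℝ) (hg : ContDiff ℝ 4 g) (x : ℝ) :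
    iteratedDeriv 2 (fun y => g y * g y) x
      = 2 * (deriv g x) ^ 2 + 2 * g x * iteratedDeriv 2 g x := by
  have hd0 : Differentiable ℝ g := hg.differentiable (by norm_num)
  have hd1 : Differentiable ℝ (deriv g) := by
    have := hg.differentiable_iteratedDeriv 1 (by exact_mod_cast (by norm_num : (1:ℕ) < 4))
    rwa [iteratedDeriv_one] at this
  have h1 : deriv (fun y => g y * g y) = fun y => deriv g y * g y + g y * deriv g y :=
    funext fun y => deriv_mul (hd0 y) (hd0 y)
  rw [iter_two, h1, iter_two]
  rw [deriv_fun_add (f := fun y => deriv g y * g y) (g := fun y => g y * deriv g y) ((hd1 x).mul (hd0 x)) ((hd0 x).mul (hd1 x)),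
      deriv_fun_mul (hd1 x) (hd0 x), deriv_fun_mul (hd0 x) (hd1 x)]
  ring


theorem stmt2
    (r : ℕ → ℝ) (hr : ∀ n, r n ∈ Set.Icc (0:ℝ) (1/2))
    (hr0 : Filter.Tendsto r Filter.atTop (nhds 0))
    (g : ℝ → ℝ) (hgper : Function.Periodic g 1)
    (hgpos : ∃ c > 0, ∀ x, c ≤ g x)
    (hgsmooth : ContDiff ℝ 4 g)
    (hgbd : ∃ M, ∀ x, |iteratedDeriv 4 g x| ≤ M)
    (f : ℝ → ℝ) (hf : f = Set.indicator (Set.Icc 0 1) g)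
    (hdens : ∫ x, f x = 1)
    (adj : ℕ → ℝ → ℝ → ℝ)
    (hadj : ∀ n x y, adj n x y = if min |x - y| (1 - |x - y|) ≤ r n then (1:ℝ) else 0)
    :
    ∃ C > 0, ∃ N : ℕ, ∀ n ≥ N, ∀ x ∈ Set.Icc (0:ℝ) 1,
      |(∫ y, ∫ z, adj n x y * adj n y z * (f y * f z))
        - (4 * (r n)^2 * (g x)^2
            + (r n)^4 / 3 * (4 * (deriv g x)^2 + 6 * g x * iteratedDeriv 2 g x))|
        ≤ C * (r n)^6 := by
  obtain ⟨M, hM⟩ := hgbd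
  have hM0 : 0 ≤ M := (abs_nonneg _).trans (hM 0)
  have hgc : Continuous g := hgsmooth.continuous
  have hper : ∀ k : ℕ, Function.Periodic (iteratedDeriv k g) 1 := per_iter g hgper
  have hcontk : ∀ k : ℕ, k ≤ 4 → Continuous (iteratedDeriv k g) := by
    intro k hk
    exact hgsmooth.continuous_iteratedDeriv k (by exact_mod_cast hk)
  obtain ⟨B0, hB00, hB0b⟩ := per_bound _ (hcontk 0 (by norm_num)) (hper 0)
  obtain ⟨B1, hB10, hB1b⟩ := per_bound _ (hcontk 1 (by norm_num)) (hper 1)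
  obtain ⟨B2, hB20, hB2b⟩ := per_bound _ (hcontk 2 (by norm_num)) (hper 2)
  obtain ⟨B3, hB30, hB3b⟩ := per_bound _ (hcontk 3 (by norm_num)) (hper 3)
  obtain ⟨B4, hB40, hB4b⟩ := per_bound _ (hcontk 4 (by norm_num)) (hper 4)
  set B : ℝ := B0 + B1 + B2 + B3 + B4 with hBdef
  have hBB0 : 0 ≤ B := by simp only [hBdef]; linarith
  have hB : ∀ k, k ≤ 4 → ∀ x, |iteratedDeriv k g x| ≤ B := by
    intro k hk x
    interval_cases k
    · exact (hB0b x).trans (by simp only [hBdef]; linarith)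
    · exact (hB1b x).trans (by simp only [hBdef]; linarith)
    · exact (hB2b x).trans (by simp only [hBdef]; linarith)
    · exact (hB3b x).trans (by simp only [hBdef]; linarith)
    · exact (hB4b x).trans (by simp only [hBdef]; linarith)
  have hgB : ∀ x, |g x| ≤ B := by
    intro x
    have := hB 0 (by norm_num) x
    simpa using this
  have hB2' : ∀ i, i ≤ 2 → ∀ x, |iteratedDeriv i (iteratedDeriv 2 g) x| ≤ B := by
    intro i hi x
    rw [iter_add_two]
    exact hB (i+2) (by omega) x
  have hp4 : ContDiff ℝ ((4:ℕ) : WithTop ℕ∞) g := by exact_mod_cast hgsmooth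
  have hq2 : ContDiff ℝ ((2:ℕ) : WithTop ℕ∞) (iteratedDeriv 2 g) := by
    have h1 : ContDiff ℝ ((2 + 2 : ℕ) : WithTop ℕ∞) g := by exact_mod_cast hgsmooth
    have h2 := ContDiff.iterate_deriv' 2 2 h1
    rwa [← iteratedDeriv_eq_iterate] at h2
  have hg2' : ContDiff ℝ ((2:ℕ) : WithTop ℕ∞) g := by
    apply hp4.of_le
    exact_mod_cast (by norm_num : (2:ℕ) ≤ 4)
  have hMp : ∀ x, |iteratedDeriv 4 (fun y => g y * g y) x| ≤ 2^4 * B^2 :=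
    prod_bound g g 4 hp4 hp4 B hB hB
  have hMq : ∀ x, |iteratedDeriv 2 (fun y => g y * iteratedDeriv 2 g y) x| ≤ 2^2 * B^2 :=
    prod_bound g (iteratedDeriv 2 g) 2 hg2' hq2 B (fun i hi x => hB i (by omega) x) hB2'
  refine ⟨4*B*M + 2*(2^4*B^2)*2 + 2^2*B^2 + 1, by positivity, 0, ?_⟩
  intro n _ x hx
  obtain ⟨hx0, hx1⟩ := hx
  obtain ⟨hr0n, hr2n⟩ := hr n
  set ρ : ℝ := r n with hρdef
  -- the convolution kernel
  set G0 : ℝ → ℝ := fun b => ∫ t in (0:ℝ)..b, g t with hG0def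
  have hG0c : Continuous G0 :=
    intervalIntegral.continuous_primitive (fun a b => hgc.intervalIntegrable a b) 0
  set K : ℝ → ℝ := fun y => ∫ t in (y - ρ)..(y + ρ), g t with hKdef
  have hKeq : ∀ y, K y = G0 (y + ρ) - G0 (y - ρ) := by
    intro y
    simp only [hKdef, hG0def]
    exact (intervalIntegral.integral_interval_sub_left (hgc.intervalIntegrable _ _)
      (hgc.intervalIntegrable _ _)).symm
  have hKc : Continuous K := by
    rw [show K = fun y => G0 (y + ρ) - G0 (y - ρ) from funext hKeq]
    exact (hG0c.comp (continuous_id.add continuous_const)).sub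
      (hG0c.comp (continuous_id.sub continuous_const))
  set φ : ℝ → ℝ := fun y => g y * K y with hφdef
  have hφc : Continuous φ := hgc.mul hKc
  have hφp : Function.Periodic φ 1 := by
    intro y
    have h1 : K (y + 1) = K y := by
      show (∫ t in (y+1-ρ)..(y+1+ρ), g t) = ∫ t in (y-ρ)..(y+ρ), g t
      rw [show y+1-ρ = (y-ρ)+1 by ring, show y+1+ρ = (y+ρ)+1 by ring]
      exact per_shift g hgper _ _
    show g (y+1) * K (y+1) = g y * K y
    rw [hgper y, h1]
  -- reduction of the double integral
  have inner_eq : ∀ y ∈ Set.Icc (0:ℝ) 1, (∫ z, adj n y z * f z) = K y := by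
    intro y hy
    have h2 : (∫ z, adj n y z * f z)
        = ∫ z, (if min |y - z| (1 - |y - z|) ≤ ρ then (1:ℝ) else 0)
            * Set.indicator (Set.Icc 0 1) g z := by
      congr 1
      funext z
      rw [hadj, hf]
    rw [h2]
    exact reduce g hgc hgper hr0n hr2n hy.1 hy.2
  have outer_pt : ∀ y, (adj n x y * f y) * (∫ z, adj n y z * f z)
      = adj n x y * Set.indicator (Set.Icc 0 1) φ y := by
    intro y
    by_cases hy : y ∈ Set.Icc (0:ℝ) 1
    · rw [inner_eq y hy, Set.indicator_of_mem hy, hf, Set.indicator_of_mem hy]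
      simp only [hφdef]
      ring
    · rw [Set.indicator_of_notMem hy, hf, Set.indicator_of_notMem hy]
      ring
  have main_eq : (∫ y, ∫ z, adj n x y * adj n y z * (f y * f z))
      = ∫ t in (x - ρ)..(x + ρ), φ t := by
    have e1 : ∀ y, (∫ z, adj n x y * adj n y z * (f y * f z))
        = (adj n x y * f y) * ∫ z, adj n y z * f z := by
      intro y
      rw [← MeasureTheory.integral_const_mul]
      congr 1
      funext z
      ring
    calc (∫ y, ∫ z, adj n x y * adj n y z * (f y * f z))
        = ∫ y, (if min |x - y| (1 - |x - y|) ≤ ρ then (1:ℝ) else 0)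
            * Set.indicator (Set.Icc 0 1) φ y := by
          congr 1
          funext y
          rw [e1 y, outer_pt y, hadj]
    _ = ∫ t in (x - ρ)..(x + ρ), φ t := reduce φ hφc hφp hr0n hr2n hx0 hx1
  -- Taylor expansion
  set E : ℝ → ℝ := fun y => K y - (2*ρ*g y + ρ^3/3 * iteratedDeriv 2 g y) with hEdef
  have hEbd : ∀ y, |E y| ≤ 2*M*ρ^5 := fun y => taylor4 g hgsmooth hM y ρ hr0n
  have hEc : Continuous E :=
    hKc.sub ((continuous_const.mul hgc).add (continuous_const.mul (hcontk 2 (by norm_num))))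
  have hint1 : IntervalIntegrable (fun y => g y * E y) volume (x-ρ) (x+ρ) :=
    (hgc.mul hEc).intervalIntegrable _ _
  have hint2 : IntervalIntegrable (fun y => g y * g y) volume (x-ρ) (x+ρ) :=
    (hgc.mul hgc).intervalIntegrable _ _
  have hint3 : IntervalIntegrable (fun y => g y * iteratedDeriv 2 g y) volume (x-ρ) (x+ρ) :=
    (hgc.mul (hcontk 2 (by norm_num))).intervalIntegrable _ _
  have hsplit : (∫ t in (x - ρ)..(x + ρ), φ t)
      = (∫ y in (x-ρ)..(x+ρ), g y * E y)
        + ((2*ρ) * ∫ y in (x-ρ)..(x+ρ), g y * g y)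
        + ((ρ^3/3) * ∫ y in (x-ρ)..(x+ρ), g y * iteratedDeriv 2 g y) := by
    have hcongr : ∀ t ∈ Set.uIcc (x-ρ) (x+ρ), φ t
        = g t * E t + ((2*ρ) * (g t * g t) + (ρ^3/3) * (g t * iteratedDeriv 2 g t)) := by
      intro t _
      simp only [hφdef, hEdef]
      ring
    rw [intervalIntegral.integral_congr hcongr]
    rw [intervalIntegral.integral_add hint1
      ((hint2.const_mul _).add (hint3.const_mul _))]
    rw [intervalIntegral.integral_add (hint2.const_mul _) (hint3.const_mul _)]
    rw [intervalIntegral.integral_const_mul, intervalIntegral.integral_const_mul]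
    ring
  have hI1 : |∫ y in (x-ρ)..(x+ρ), g y * E y| ≤ (B * (2*M*ρ^5)) * (2*ρ) := by
    have hb : ∀ y ∈ Set.uIoc (x-ρ) (x+ρ), ‖g y * E y‖ ≤ B * (2*M*ρ^5) := by
      intro y _
      rw [Real.norm_eq_abs, abs_mul]
      exact mul_le_mul (hgB y) (hEbd y) (abs_nonneg _) hBB0
    have := intervalIntegral.norm_integral_le_of_norm_le_const hb
    rw [Real.norm_eq_abs] at this
    refine this.trans (le_of_eq ?_)
    rw [show x + ρ - (x - ρ) = 2*ρ by ring, abs_of_nonneg (by linarith)]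
  have hSa := taylor4 (fun y => g y * g y) (hgsmooth.mul hgsmooth) hMp x ρ hr0n
  have hSb := taylor2 (fun y => g y * iteratedDeriv 2 g y)
    (by exact_mod_cast hg2'.mul hq2) hMq x ρ hr0n
  have hid := iter2_sq g hgsmooth x
  rw [main_eq, hsplit]
  set I1 := ∫ y in (x-ρ)..(x+ρ), g y * E y with hI1def
  set Sa := ∫ y in (x-ρ)..(x+ρ), g y * g y with hSadef
  set Sb := ∫ y in (x-ρ)..(x+ρ), g y * iteratedDeriv 2 g y with hSbdef
  have key : I1 + (2*ρ) * Sa + (ρ^3/3) * Sb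
      - (4 * ρ^2 * (g x)^2 + ρ^4 / 3 * (4 * (deriv g x)^2 + 6 * g x * iteratedDeriv 2 g x))
      = I1 + (2*ρ) * (Sa - (2 * ρ * (g x * g x)
          + ρ ^ 3 / 3 * iteratedDeriv 2 (fun y => g y * g y) x))
        + (ρ^3/3) * (Sb - 2 * ρ * (g x * iteratedDeriv 2 g x)) := by
    rw [hid]
    ring
  rw [key]
  set X : ℝ := Sa - (2 * ρ * (g x * g x)
      + ρ ^ 3 / 3 * iteratedDeriv 2 (fun y => g y * g y) x) with hXdef
  set Y : ℝ := Sb - 2 * ρ * (g x * iteratedDeriv 2 g x) with hYdef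
  have habs : |I1 + (2*ρ) * X + (ρ^3/3) * Y|
      ≤ |I1| + (2*ρ) * |X| + (ρ^3/3) * |Y| := by
    have t1 : |I1 + (2*ρ) * X + (ρ^3/3) * Y| ≤ |I1 + (2*ρ) * X| + |(ρ^3/3) * Y| := abs_add_le _ _
    have t2 : |I1 + (2*ρ) * X| ≤ |I1| + |(2*ρ) * X| := abs_add_le _ _
    have t3 : |(2*ρ) * X| = (2*ρ) * |X| := by
      rw [abs_mul, abs_of_nonneg (by linarith : (0:ℝ) ≤ 2*ρ)]
    have t4 : |(ρ^3/3) * Y| = (ρ^3/3) * |Y| := by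
      rw [abs_mul, abs_of_nonneg (by positivity : (0:ℝ) ≤ ρ^3/3)]
    rw [t3] at t2
    rw [t4] at t1
    linarith
  refine habs.trans ?_
  clear_value X Y I1 Sa Sb B ρ
  have h1 : |I1| ≤ 4*B*M*ρ^6 := by
    refine hI1.trans (le_of_eq ?_)
    ring
  have h2 : (2*ρ) * |X| ≤ 2*(2^4*B^2)*2*ρ^6 := by
    calc (2*ρ) * |X| ≤ (2*ρ) * (2*(2^4*B^2)*ρ^5) := by
          apply mul_le_mul_of_nonneg_left _ (by linarith)
          exact hSa
    _ = 2*(2^4*B^2)*2*ρ^6 := by ring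
  have h3 : (ρ^3/3) * |Y| ≤ (2^2*B^2)*ρ^6 := by
    have hpos : (0:ℝ) ≤ (2^2*B^2)*ρ^6 := by positivity
    calc (ρ^3/3) * |Y| ≤ (ρ^3/3) * (2*(2^2*B^2)*ρ^3) := by
          apply mul_le_mul_of_nonneg_left _ (by positivity)
          exact hSb
    _ = (2/3) * ((2^2*B^2)*ρ^6) := by ring
    _ ≤ (2^2*B^2)*ρ^6 := by linarith
  have hρ6 : (0:ℝ) ≤ ρ^6 := pow_nonneg hr0n 6
  have hexp : (4*B*M + 2*(2^4*B^2)*2 + 2^2*B^2 + 1)*ρ^6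
      = 4*B*M*ρ^6 + 2*(2^4*B^2)*2*ρ^6 + (2^2*B^2)*ρ^6 + ρ^6 := by ring
  linarith [h1, h2, h3, hρ6, hexp]
end
end

section
/- As n → ∞, E[A_{12} A_{13}] = 4 r_n^2 E[f(X_1)^2] + (4 r_n^4/3) E[f(X_1) f''(X_1)] + O(r_n^5); that is, there exist C > 0 and N such that for all n ≥ N, |E[A_{12} A_{13}] − 4 r_n^2 ∫_0^1 f(x)^3 dx − (4 r_n^4/3) ∫_0^1 f(x)^2 f''(x) dx| ≤ C r_n^5. -/
open MeasureTheory ProbabilityTheory Filter Finset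

noncomputable section
open intervalIntegral


lemma poly_bound {φ φ' : ℝ → ℝ} (hd : ∀ s, HasDerivAt φ (φ' s) s) (h0 : φ 0 = 0)
    {C : ℝ} (k : ℕ) {R : ℝ}
    (hb : ∀ s ∈ Set.Icc (0:ℝ) R, |φ' s| ≤ C * s ^ k) :
    ∀ s ∈ Set.Icc (0:ℝ) R, |φ s| ≤ C * s ^ (k+1) / (k+1) := by
  intro s hs
  obtain ⟨hs0, hsR⟩ := hs
  have hk1 : (0:ℝ) < (k:ℝ) + 1 := by positivity
  have hP : ∀ t : ℝ, HasDerivAt (fun t => C * t ^ (k+1) / ((k:ℝ)+1)) (C * t ^ k) t := by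
    intro t
    have h1 := (hasDerivAt_pow (k+1) t).const_mul (C / ((k:ℝ)+1))
    have h2 : (fun t : ℝ => C * t ^ (k+1) / ((k:ℝ)+1))
        = fun t : ℝ => C / ((k:ℝ)+1) * t ^ (k+1) := funext fun t => by ring
    rw [h2]
    refine h1.congr_deriv ?_
    push_cast
    field_simp
  have key : ∀ (σ σ' : ℝ → ℝ), (∀ t, HasDerivAt σ (σ' t) t) →
      (∀ t ∈ Set.Icc (0:ℝ) s, 0 ≤ σ' t) → σ 0 ≤ σ s := by
    intro σ σ' hdσ hpos
    have hmono := monotoneOn_of_deriv_nonneg (convex_Icc (0:ℝ) s)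
      (fun t _ => (hdσ t).continuousAt.continuousWithinAt)
      (fun t _ => (hdσ t).differentiableAt.differentiableWithinAt)
      (by
        intro t ht
        rw [interior_Icc] at ht
        rw [(hdσ t).deriv]
        exact hpos t ⟨ht.1.le, ht.2.le⟩)
    exact hmono ⟨le_rfl, hs0⟩ ⟨hs0, le_rfl⟩ hs0
  have hu : φ s ≤ C * s ^ (k+1) / ((k:ℝ)+1) := by
    have := key (fun t => C * t ^ (k+1) / ((k:ℝ)+1) - φ t) (fun t => C * t ^ k - φ' t)
      (fun t => (hP t).sub (hd t))
      (by
        intro t ht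
        have hbt := hb t ⟨ht.1, ht.2.trans hsR⟩
        have := (abs_le.mp hbt).2
        simp only [sub_nonneg]
        linarith)
    simp only [h0, zero_pow (Nat.succ_ne_zero k), mul_zero, zero_div, sub_zero] at this
    linarith
  have hv : -(C * s ^ (k+1) / ((k:ℝ)+1)) ≤ φ s := by
    have := key (fun t => C * t ^ (k+1) / ((k:ℝ)+1) + φ t) (fun t => C * t ^ k + φ' t)
      (fun t => (hP t).add (hd t))
      (by
        intro t ht
        have hbt := hb t ⟨ht.1, ht.2.trans hsR⟩
        have := (abs_le.mp hbt).1
        show 0 ≤ C * t ^ k + φ' t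
        linarith)
    simp only [h0, zero_pow (Nat.succ_ne_zero k), mul_zero, zero_div, add_zero] at this
    linarith
  rw [abs_le]
  constructor
  · exact_mod_cast hv
  · exact_mod_cast hu

lemma per_bdd {φ : ℝ → ℝ} (hc : Continuous φ) (hp : Function.Periodic φ 1) :
    ∃ B, 0 ≤ B ∧ ∀ x, |φ x| ≤ B := by
  obtain ⟨B, hB⟩ := (isCompact_Icc (a := (0:ℝ)) (b := 1)).exists_bound_of_continuousOn
    hc.continuousOn
  refine ⟨max B 0, le_max_right _ _, fun x => ?_⟩
  have h1 : φ (Int.fract x) = φ x := by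
    have h := hp.sub_int_mul_eq (x := x) ⌊x⌋
    rw [mul_one, Int.self_sub_floor] at h
    exact h
  rw [← h1]
  have h2 : Int.fract x ∈ Set.Icc (0:ℝ) 1 :=
    ⟨Int.fract_nonneg x, (Int.fract_lt_one x).le⟩
  have := hB _ h2
  rw [Real.norm_eq_abs] at this
  exact this.trans (le_max_left _ _)

lemma periodic_deriv (φ : ℝ → ℝ) (h : Function.Periodic φ 1) :
    Function.Periodic (deriv φ) 1 := by
  intro x
  have h2 : (fun y => φ (y + 1)) = φ := funext h
  calc deriv φ (x + 1) = deriv (fun y => φ (y + 1)) x := (deriv_comp_add_const φ 1 x).symm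
    _ = deriv φ x := by rw [h2]

lemma shift_int (g : ℝ → ℝ) (hgper : Function.Periodic g 1) (a b : ℝ) :
    (∫ t in (a+1)..(b+1), g t) = ∫ t in a..b, g t := by
  rw [← intervalIntegral.integral_comp_add_right g 1]
  congr 1
  funext t
  exact hgper t

lemma icc_int (g : ℝ → ℝ) (hgc : Continuous g) {a b : ℝ} (h : a ≤ b) :
    (∫ y in Set.Icc a b, g y) = ∫ t in a..b, g t := by
  rw [MeasureTheory.integral_Icc_eq_integral_Ioc, intervalIntegral.integral_of_le h]

lemma icc_int_zero (g : ℝ → ℝ) {a b : ℝ} (h : b ≤ a) :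
    (∫ y in Set.Icc a b, g y) = 0 := by
  rw [MeasureTheory.integral_Icc_eq_integral_Ioc, Set.Ioc_eq_empty (not_lt.mpr h)]
  simp

set_option maxHeartbeats 2000000 in
lemma inner_int (g : ℝ → ℝ) (hgc : Continuous g) (hgper : Function.Periodic g 1)
    {ρ x : ℝ} (hρ0 : 0 ≤ ρ) (hρ : ρ < 1/2) (hx0 : 0 ≤ x) (hx1 : x ≤ 1) :
    (∫ y, (if min |x - y| (1 - |x - y|) ≤ ρ then (1:ℝ) else 0)
        * Set.indicator (Set.Icc 0 1) g y)
      = ∫ t in (x - ρ)..(x + ρ), g t := by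
  have hgi : ∀ a b : ℝ, IntervalIntegrable g volume a b := fun a b =>
    hgc.intervalIntegrable a b
  have hpt : ∀ y, (if min |x - y| (1 - |x - y|) ≤ ρ then (1:ℝ) else 0)
        * Set.indicator (Set.Icc 0 1) g y
      = (Set.Icc (max (x - ρ) 0) (min (x + ρ) 1)).indicator g y
        + (Set.Icc 0 (x - 1 + ρ)).indicator g y
        + (Set.Icc (x + 1 - ρ) 1).indicator g y := by
    intro y
    simp only [Set.indicator_apply, Set.mem_Icc, min_le_iff, max_le_iff, le_min_iff]
    rcases abs_cases (x - y) with ⟨hab, hsg⟩ | ⟨hab, hsg⟩ <;> rw [hab] <;>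
      split_ifs <;>
        first
          | ring1
          | (exfalso
             (try simp only [not_and_or, not_le, not_or] at *)
             (try casesm* _ ∨ _, _ ∧ _) <;> linarith)
  have hint : ∀ a b : ℝ, Integrable ((Set.Icc a b).indicator g) volume := fun a b =>
    (hgc.integrableOn_Icc).integrable_indicator measurableSet_Icc
  have hsum : (∫ y, (if min |x - y| (1 - |x - y|) ≤ ρ then (1:ℝ) else 0)
        * Set.indicator (Set.Icc 0 1) g y)
      = (∫ y in Set.Icc (max (x - ρ) 0) (min (x + ρ) 1), g y)
        + (∫ y in Set.Icc 0 (x - 1 + ρ), g y)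
        + (∫ y in Set.Icc (x + 1 - ρ) 1, g y) := by
    rw [MeasureTheory.integral_congr_ae (Filter.Eventually.of_forall hpt)]
    have i1 := hint (max (x - ρ) 0) (min (x + ρ) 1)
    have i2 := hint 0 (x - 1 + ρ)
    have i3 := hint (x + 1 - ρ) 1
    have i12 : Integrable (fun a => (Set.Icc (max (x - ρ) 0) (min (x + ρ) 1)).indicator g a
        + (Set.Icc 0 (x - 1 + ρ)).indicator g a) volume := i1.add i2
    rw [MeasureTheory.integral_add i12 i3, MeasureTheory.integral_add i1 i2,
      MeasureTheory.integral_indicator measurableSet_Icc,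
      MeasureTheory.integral_indicator measurableSet_Icc,
      MeasureTheory.integral_indicator measurableSet_Icc]
  rw [hsum]
  have hm12 : max (x - ρ) 0 ≤ min (x + ρ) 1 := by
    rw [max_le_iff, le_min_iff, le_min_iff]
    constructor <;> constructor <;> linarith
  have e1 : (∫ t in (x - ρ)..(max (x - ρ) 0), g t) + (∫ t in (max (x - ρ) 0)..(x + ρ), g t)
      = ∫ t in (x - ρ)..(x + ρ), g t := integral_add_adjacent_intervals (hgi _ _) (hgi _ _)
  have e2 : (∫ t in (max (x - ρ) 0)..(min (x + ρ) 1), g t)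
        + (∫ t in (min (x + ρ) 1)..(x + ρ), g t)
      = ∫ t in (max (x - ρ) 0)..(x + ρ), g t := integral_add_adjacent_intervals (hgi _ _) (hgi _ _)
  have mA : (∫ y in Set.Icc (max (x - ρ) 0) (min (x + ρ) 1), g y)
      = ∫ t in (max (x - ρ) 0)..(min (x + ρ) 1), g t := icc_int g hgc hm12
  have mC : (∫ y in Set.Icc (x + 1 - ρ) 1, g y) = ∫ t in (x - ρ)..(max (x - ρ) 0), g t := by
    rcases le_total 0 (x - ρ) with h | h
    · rw [max_eq_left h, intervalIntegral.integral_same, icc_int_zero g (by linarith)]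
    · rw [max_eq_right h, icc_int g hgc (by linarith)]
      have := shift_int g hgper (x - ρ) 0
      rw [show x - ρ + 1 = x + 1 - ρ by ring, show (0:ℝ) + 1 = 1 by ring] at this
      exact this
  have mB : (∫ y in Set.Icc 0 (x - 1 + ρ), g y) = ∫ t in (min (x + ρ) 1)..(x + ρ), g t := by
    rcases le_total (x + ρ) 1 with h | h
    · rw [min_eq_left h, intervalIntegral.integral_same, icc_int_zero g (by linarith)]
    · rw [min_eq_right h, icc_int g hgc (by linarith)]
      have := shift_int g hgper 0 (x - 1 + ρ)
      rw [show x - 1 + ρ + 1 = x + ρ by ring, show (0:ℝ) + 1 = 1 by ring] at this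
      exact this.symm
  rw [mA, mB, mC]
  linarith

lemma taylor5 (g : ℝ → ℝ) (hg : ContDiff ℝ 4 g) {M : ℝ} (hM : ∀ x, |iteratedDeriv 4 g x| ≤ M)
    (x : ℝ) {ρ : ℝ} (hρ0 : 0 ≤ ρ) :
    |(∫ t in (x - ρ)..(x + ρ), g t) - 2 * ρ * g x - ρ ^ 3 / 3 * iteratedDeriv 2 g x|
      ≤ M / 60 * ρ ^ 5 := by
  have hgc : Continuous g := hg.continuous
  have hgi : ∀ a b : ℝ, IntervalIntegrable g volume a b := fun a b =>
    hgc.intervalIntegrable a b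
  have hD : ∀ k : ℕ, k < 4 → ∀ t : ℝ, HasDerivAt (iteratedDeriv k g)
      (iteratedDeriv (k+1) g t) t := by
    intro k hk t
    have hdiff : Differentiable ℝ (iteratedDeriv k g) :=
      hg.differentiable_iteratedDeriv k (by exact_mod_cast hk)
    have h := (hdiff t).hasDerivAt
    rwa [iteratedDeriv_succ]
  have hplus : ∀ (k : ℕ), k < 4 → ∀ s : ℝ,
      HasDerivAt (fun s => iteratedDeriv k g (x + s)) (iteratedDeriv (k+1) g (x + s)) s := by
    intro k hk s
    have h := (hD k hk (x + s)).comp s ((hasDerivAt_id s).const_add x)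
    simpa [Function.comp_def] using h
  have hminus : ∀ (k : ℕ), k < 4 → ∀ s : ℝ,
      HasDerivAt (fun s => iteratedDeriv k g (x - s)) (-(iteratedDeriv (k+1) g (x - s))) s := by
    intro k hk s
    have h1 : HasDerivAt (fun s : ℝ => x - s) (-1 : ℝ) s := by
      simpa [Pi.sub_def] using (hasDerivAt_const s x).sub (hasDerivAt_id s)
    have h := (hD k hk (x - s)).comp s h1
    simpa [Function.comp_def] using h
  set G : ℝ → ℝ := fun t => ∫ u in (0:ℝ)..t, g u with hGdef
  have hG : ∀ t : ℝ, HasDerivAt G (g t) t := by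
    intro t
    exact intervalIntegral.integral_hasDerivAt_right (hgi 0 t)
      hgc.aestronglyMeasurable.stronglyMeasurableAtFilter hgc.continuousAt
  have hGp : ∀ s : ℝ, HasDerivAt (fun s => G (x + s)) (g (x + s)) s := by
    intro s
    have h := (hG (x + s)).comp s ((hasDerivAt_id s).const_add x)
    simpa [Function.comp_def] using h
  have hGm : ∀ s : ℝ, HasDerivAt (fun s => G (x - s)) (-(g (x - s))) s := by
    intro s
    have h1 : HasDerivAt (fun s : ℝ => x - s) (-1 : ℝ) s := by
      simpa [Pi.sub_def] using (hasDerivAt_const s x).sub (hasDerivAt_id s)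
    have h := (hG (x - s)).comp s h1
    simpa [Function.comp_def] using h
  set d1 := iteratedDeriv 1 g with hd1
  set d2 := iteratedDeriv 2 g with hd2
  set d3 := iteratedDeriv 3 g with hd3
  set d4 := iteratedDeriv 4 g with hd4
  have hplus0 : ∀ s : ℝ, HasDerivAt (fun s => g (x + s)) (d1 (x + s)) s := by
    intro s
    have := hplus 0 (by norm_num) s
    simpa only [iteratedDeriv_zero, ← hd1] using this
  have hminus0 : ∀ s : ℝ, HasDerivAt (fun s => g (x - s)) (-(d1 (x - s))) s := by
    intro s
    have := hminus 0 (by norm_num) s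
    simpa only [iteratedDeriv_zero, ← hd1] using this
  -- the psi chain
  set ψ4 : ℝ → ℝ := fun s => d3 (x + s) - d3 (x - s) with hψ4def
  set ψ3 : ℝ → ℝ := fun s => d2 (x + s) + d2 (x - s) - 2 * d2 x with hψ3def
  set ψ2 : ℝ → ℝ := fun s => d1 (x + s) - d1 (x - s) - 2 * s * d2 x with hψ2def
  set ψ1 : ℝ → ℝ := fun s => g (x + s) + g (x - s) - 2 * g x - s ^ 2 * d2 x with hψ1def
  set ψ0 : ℝ → ℝ := fun s => G (x + s) - G (x - s) - 2 * s * g x - s ^ 3 / 3 * d2 x with hψ0def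
  have hψ4 : ∀ s : ℝ, HasDerivAt ψ4 (d4 (x + s) + d4 (x - s)) s := by
    intro s
    have h := (hplus 3 (by norm_num) s).sub (hminus 3 (by norm_num) s)
    rw [hψ4def]
    refine h.congr_deriv ?_
    simp [hd1, hd2, hd3, hd4]; try ring
  have hψ3 : ∀ s : ℝ, HasDerivAt ψ3 (ψ4 s) s := by
    intro s
    have h := ((hplus 2 (by norm_num) s).add (hminus 2 (by norm_num) s)).sub_const (2 * d2 x)
    rw [hψ3def, hψ4def]
    refine h.congr_deriv ?_
    simp [hd1, hd2, hd3, hd4]; try ring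
  have hψ2 : ∀ s : ℝ, HasDerivAt ψ2 (ψ3 s) s := by
    intro s
    have h2 : HasDerivAt (fun s : ℝ => 2 * s * d2 x) (2 * d2 x) s := by
      simpa using ((hasDerivAt_id s).const_mul (2:ℝ)).mul_const (d2 x)
    have h := ((hplus 1 (by norm_num) s).sub (hminus 1 (by norm_num) s)).sub h2
    rw [hψ2def, hψ3def]
    refine h.congr_deriv ?_
    simp [hd1, hd2, hd3, hd4]; try ring
  have hψ1 : ∀ s : ℝ, HasDerivAt ψ1 (ψ2 s) s := by
    intro s
    have h2 : HasDerivAt (fun s : ℝ => s ^ 2 * d2 x) (2 * s * d2 x) s := by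
      have := (hasDerivAt_pow 2 s).mul_const (d2 x)
      refine this.congr_deriv ?_
      push_cast
      ring
    have h := (((hplus0 s).add (hminus0 s)).sub_const (2 * g x)).sub h2
    rw [hψ1def, hψ2def]
    refine h.congr_deriv ?_
    simp [hd1, hd2, hd3, hd4]; try ring
  have hψ0 : ∀ s : ℝ, HasDerivAt ψ0 (ψ1 s) s := by
    intro s
    have h2 : HasDerivAt (fun s : ℝ => 2 * s * g x) (2 * g x) s := by
      simpa using ((hasDerivAt_id s).const_mul (2:ℝ)).mul_const (g x)
    have h3 : HasDerivAt (fun s : ℝ => s ^ 3 / 3 * d2 x) (s ^ 2 * d2 x) s := by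
      have := ((hasDerivAt_pow 3 s).div_const 3).mul_const (d2 x)
      refine this.congr_deriv ?_
      push_cast
      ring
    have h := (((hGp s).sub (hGm s)).sub h2).sub h3
    rw [hψ0def, hψ1def]
    refine h.congr_deriv ?_
    simp [hd1, hd2, hd3, hd4]; try ring
  have z4 : ψ4 0 = 0 := by simp [hψ4def]
  have z3 : ψ3 0 = 0 := by rw [hψ3def]; simp; try ring
  have z2 : ψ2 0 = 0 := by rw [hψ2def]; simp
  have z1 : ψ1 0 = 0 := by rw [hψ1def]; simp; try ring
  have z0 : ψ0 0 = 0 := by rw [hψ0def]; simp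
  have b4 : ∀ s ∈ Set.Icc (0:ℝ) ρ, |ψ4 s| ≤ (2*M) * s ^ (0+1) / ((0:ℕ)+1) := by
    refine poly_bound hψ4 z4 0 ?_
    intro s hs
    have h1 := hM (x + s)
    have h2 := hM (x - s)
    calc |d4 (x + s) + d4 (x - s)| ≤ |d4 (x + s)| + |d4 (x - s)| := abs_add_le _ _
      _ ≤ (2*M) * s ^ 0 := by rw [pow_zero]; linarith
  have b3 : ∀ s ∈ Set.Icc (0:ℝ) ρ, |ψ3 s| ≤ (2*M) * s ^ (1+1) / ((1:ℕ)+1) := by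
    refine poly_bound hψ3 z3 1 ?_
    intro s hs
    calc |ψ4 s| ≤ (2*M) * s ^ (0+1) / ((0:ℕ)+1) := b4 s hs
      _ = (2*M) * s ^ 1 := by norm_num
  have b2 : ∀ s ∈ Set.Icc (0:ℝ) ρ, |ψ2 s| ≤ M * s ^ (2+1) / ((2:ℕ)+1) := by
    refine poly_bound hψ2 z2 2 ?_
    intro s hs
    calc |ψ3 s| ≤ (2*M) * s ^ (1+1) / ((1:ℕ)+1) := b3 s hs
      _ = M * s ^ 2 := by norm_num; ring
  have b1 : ∀ s ∈ Set.Icc (0:ℝ) ρ, |ψ1 s| ≤ (M/3) * s ^ (3+1) / ((3:ℕ)+1) := by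
    refine poly_bound hψ1 z1 3 ?_
    intro s hs
    calc |ψ2 s| ≤ M * s ^ (2+1) / ((2:ℕ)+1) := b2 s hs
      _ = (M/3) * s ^ 3 := by norm_num; ring
  have b0 : ∀ s ∈ Set.Icc (0:ℝ) ρ, |ψ0 s| ≤ (M/12) * s ^ (4+1) / ((4:ℕ)+1) := by
    refine poly_bound hψ0 z0 4 ?_
    intro s hs
    calc |ψ1 s| ≤ (M/3) * s ^ (3+1) / ((3:ℕ)+1) := b1 s hs
      _ = (M/12) * s ^ 4 := by norm_num; ring
  have hIG : (∫ t in (x - ρ)..(x + ρ), g t) = G (x + ρ) - G (x - ρ) :=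
    (intervalIntegral.integral_interval_sub_left (hgi 0 (x + ρ)) (hgi 0 (x - ρ))).symm
  have hfin := b0 ρ ⟨hρ0, le_rfl⟩
  rw [hψ0def] at hfin
  simp only at hfin
  rw [hIG]
  calc |G (x + ρ) - G (x - ρ) - 2 * ρ * g x - ρ ^ 3 / 3 * d2 x|
      ≤ (M/12) * ρ ^ (4+1) / ((4:ℕ)+1) := hfin
    _ = M / 60 * ρ ^ 5 := by norm_num; ring


set_option maxHeartbeats 2000000 in
theorem stmt4
    (r : ℕ → ℝ) (hr : ∀ n, r n ∈ Set.Icc (0:ℝ) (1/2))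
    (hr0 : Filter.Tendsto r Filter.atTop (nhds 0))
    (g : ℝ → ℝ) (hgper : Function.Periodic g 1)
    (hgpos : ∃ c > 0, ∀ x, c ≤ g x)
    (hgsmooth : ContDiff ℝ 4 g)
    (hgbd : ∃ M, ∀ x, |iteratedDeriv 4 g x| ≤ M)
    (f : ℝ → ℝ) (hf : f = Set.indicator (Set.Icc 0 1) g)
    (hdens : ∫ x, f x = 1)
    (adj : ℕ → ℝ → ℝ → ℝ)
    (hadj : ∀ n x y, adj n x y = if min |x - y| (1 - |x - y|) ≤ r n then (1:ℝ) else 0)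
    :
    ∃ C > 0, ∃ N : ℕ, ∀ n ≥ N,
      |(∫ x, ∫ y, ∫ z, adj n x y * adj n x z * (f x * f y * f z))
        - 4 * (r n)^2 * (∫ x in (0:ℝ)..1, (g x)^3)
        - 4 * (r n)^4 / 3 * (∫ x in (0:ℝ)..1, (g x)^2 * iteratedDeriv 2 g x)|
        ≤ C * (r n)^5 := by
  subst hf
  obtain ⟨M, hM⟩ := hgbd
  have hM0 : 0 ≤ M := (abs_nonneg _).trans (hM 0)
  have hgc : Continuous g := hgsmooth.continuous
  have hg2c : Continuous (iteratedDeriv 2 g) :=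
    hgsmooth.continuous_iteratedDeriv 2 (by norm_num)
  have hg2per : Function.Periodic (iteratedDeriv 2 g) 1 := by
    have h1 := periodic_deriv g hgper
    have h2 := periodic_deriv _ h1
    have h3 : iteratedDeriv 2 g = deriv (deriv g) := by
      rw [iteratedDeriv_succ, iteratedDeriv_one]
    rw [h3]
    exact h2
  obtain ⟨B0, hB00, hB0⟩ := per_bdd hgc hgper
  obtain ⟨B2, hB20, hB2⟩ := per_bdd hg2c hg2per
  set Cp := B0 * (M/60) * (2*B0 + 2*B2 + M) + B0 * B2^2 with hCp
  have hCp0 : 0 ≤ Cp := by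
    rw [hCp]
    have : (0:ℝ) ≤ B0 * (M/60) * (2*B0 + 2*B2 + M) := by positivity
    nlinarith [sq_nonneg B2]
  refine ⟨Cp + 1, by linarith, ?_⟩
  have hev : ∀ᶠ n in Filter.atTop, r n < 1/2 :=
    hr0.eventually_lt_const (by norm_num : (0:ℝ) < 1/2)
  obtain ⟨N, hN⟩ := Filter.eventually_atTop.mp hev
  refine ⟨N, ?_⟩
  intro n hn
  have hρ0 : 0 ≤ r n := (hr n).1
  have hρh : r n ≤ 1/2 := (hr n).2
  have hρlt : r n < 1/2 := hN n hn
  set ρ := r n with hρdef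
  set G : ℝ → ℝ := fun t => ∫ u in (0:ℝ)..t, g u with hGdef
  have hgi : ∀ a b : ℝ, IntervalIntegrable g volume a b := fun a b =>
    hgc.intervalIntegrable a b
  have hG : ∀ t : ℝ, HasDerivAt G (g t) t := fun t =>
    intervalIntegral.integral_hasDerivAt_right (hgi 0 t)
      hgc.aestronglyMeasurable.stronglyMeasurableAtFilter hgc.continuousAt
  have hGc : Continuous G := by
    have : Differentiable ℝ G := fun t => (hG t).differentiableAt
    exact this.continuous
  set I : ℝ → ℝ := fun x => ∫ t in (x - ρ)..(x + ρ), g t with hIdef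
  have hIG : ∀ x : ℝ, I x = G (x + ρ) - G (x - ρ) := fun x =>
    (intervalIntegral.integral_interval_sub_left (hgi 0 (x + ρ)) (hgi 0 (x - ρ))).symm
  have hIc : Continuous I := by
    have h1 : I = fun x => G (x + ρ) - G (x - ρ) := funext hIG
    rw [h1]
    exact (hGc.comp (continuous_id.add continuous_const)).sub
      (hGc.comp (continuous_id.sub continuous_const))
  set F : ℝ → ℝ := Set.indicator (Set.Icc 0 1) g with hFdef
  set h : ℝ → ℝ := fun x => ∫ y, adj n x y * F y with hhdef
  -- Step 1: collapse the triple integral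
  have step1 : (∫ x, ∫ y, ∫ z, adj n x y * adj n x z * (F x * F y * F z))
      = ∫ x, Set.indicator (Set.Icc (0:ℝ) 1) (fun x => g x * I x * I x) x := by
    refine MeasureTheory.integral_congr_ae (Filter.Eventually.of_forall fun x => ?_)
    have e1 : ∀ y : ℝ, (∫ z, adj n x y * adj n x z * (F x * F y * F z))
        = (F x * h x) * (adj n x y * F y) := by
      intro y
      rw [show (fun z => adj n x y * adj n x z * (F x * F y * F z))
          = fun z => (adj n x y * (F x * F y)) * (adj n x z * F z) from funext fun z => by ring]
      rw [MeasureTheory.integral_const_mul]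
      rw [hhdef]
      ring
    have e2 : (∫ y, ∫ z, adj n x y * adj n x z * (F x * F y * F z)) = (F x * h x) * h x := by
      rw [show (fun y => ∫ z, adj n x y * adj n x z * (F x * F y * F z))
          = fun y => (F x * h x) * (adj n x y * F y) from funext e1]
      rw [MeasureTheory.integral_const_mul]
    show (∫ y, ∫ z, adj n x y * adj n x z * (F x * F y * F z))
        = Set.indicator (Set.Icc (0:ℝ) 1) (fun x => g x * I x * I x) x
    rw [e2]
    by_cases hx : x ∈ Set.Icc (0:ℝ) 1
    · rw [Set.indicator_of_mem hx]
      have hFx : F x = g x := by rw [hFdef, Set.indicator_of_mem hx]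
      have hh : h x = I x := by
        rw [hhdef]
        simp only [hadj]
        rw [hFdef, hIdef]
        exact inner_int g hgc hgper hρ0 hρlt hx.1 hx.2
      rw [hFx, hh]
      try ring
    · rw [Set.indicator_of_notMem hx]
      have hFx : F x = 0 := by rw [hFdef, Set.indicator_of_notMem hx]
      rw [hFx]
      try ring
  rw [step1, MeasureTheory.integral_indicator measurableSet_Icc,
    MeasureTheory.integral_Icc_eq_integral_Ioc,
    ← intervalIntegral.integral_of_le (by norm_num : (0:ℝ) ≤ 1)]
  -- Step 2: combine into a single interval integral
  have hi1 : IntervalIntegrable (fun x => g x * I x * I x) volume 0 1 :=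
    ((hgc.mul hIc).mul hIc).intervalIntegrable 0 1
  have hi2 : IntervalIntegrable (fun x => (g x)^3) volume 0 1 :=
    (hgc.pow 3).intervalIntegrable 0 1
  have hi3 : IntervalIntegrable (fun x => (g x)^2 * iteratedDeriv 2 g x) volume 0 1 :=
    ((hgc.pow 2).mul hg2c).intervalIntegrable 0 1
  have e3 : (∫ x in (0:ℝ)..1, g x * I x * I x)
        - 4 * ρ^2 * (∫ x in (0:ℝ)..1, (g x)^3)
        - 4 * ρ^4 / 3 * (∫ x in (0:ℝ)..1, (g x)^2 * iteratedDeriv 2 g x)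
      = ∫ x in (0:ℝ)..1, (g x * I x * I x
          - (4 * ρ^2 * (g x)^3 + 4 * ρ^4 / 3 * ((g x)^2 * iteratedDeriv 2 g x))) := by
    rw [intervalIntegral.integral_sub hi1 ((hi2.const_mul _).add (hi3.const_mul _)),
      intervalIntegral.integral_add (hi2.const_mul _) (hi3.const_mul _),
      intervalIntegral.integral_const_mul, intervalIntegral.integral_const_mul]
    ring
  rw [e3]
  -- Step 3: pointwise bound
  have hbnd : ∀ x ∈ Set.uIoc (0:ℝ) 1, ‖g x * I x * I x
      - (4 * ρ^2 * (g x)^3 + 4 * ρ^4 / 3 * ((g x)^2 * iteratedDeriv 2 g x))‖ ≤ Cp * ρ^5 := by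
    intro x hx'
    have hx : x ∈ Set.Icc (0:ℝ) 1 := by
      rw [Set.uIoc_of_le (by norm_num : (0:ℝ) ≤ 1)] at hx'
      exact ⟨hx'.1.le, hx'.2⟩
    have hρ3 : ρ^3 ≤ 1 := by nlinarith
    have hρ5 : ρ^5 ≤ 1 := by nlinarith [pow_nonneg hρ0 3, pow_nonneg hρ0 5, sq_nonneg ρ]
    set m := 2 * ρ * g x + ρ^3 / 3 * iteratedDeriv 2 g x with hm
    have heb : |I x - m| ≤ M/60 * ρ^5 := by
      have ht := taylor5 g hgsmooth hM x hρ0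
      have : I x - m = (∫ t in (x - ρ)..(x + ρ), g t) - 2 * ρ * g x
          - ρ^3 / 3 * iteratedDeriv 2 g x := by
        rw [hm, hIdef]; ring
      rw [this]
      exact ht
    have hgb := hB0 x
    have hg2b := hB2 x
    have hmb : |m| ≤ B0 + B2 := by
      rw [hm]
      have h1 : |2 * ρ * g x + ρ^3/3 * iteratedDeriv 2 g x|
          ≤ |2 * ρ * g x| + |ρ^3/3 * iteratedDeriv 2 g x| := abs_add_le _ _
      have e2ρ : |2 * ρ * g x| = 2 * ρ * |g x| := by
        rw [abs_mul, abs_of_nonneg (by linarith : (0:ℝ) ≤ 2 * ρ)]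
      have e3ρ : |ρ^3/3 * iteratedDeriv 2 g x| = ρ^3/3 * |iteratedDeriv 2 g x| := by
        rw [abs_mul, abs_of_nonneg (by positivity : (0:ℝ) ≤ ρ^3/3)]
      rw [e2ρ, e3ρ] at h1
      have t1 : 2 * ρ * |g x| ≤ B0 := by nlinarith [abs_nonneg (g x)]
      have t2 : ρ^3/3 * |iteratedDeriv 2 g x| ≤ B2 := by
        nlinarith [abs_nonneg (iteratedDeriv 2 g x), pow_nonneg hρ0 3]
      linarith
    have heM : |I x - m| ≤ M := by
      have : M/60 * ρ^5 ≤ M := by nlinarith [pow_nonneg hρ0 5]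
      linarith
    have hIb : |I x| ≤ B0 + B2 + M := by
      have h1 : I x = m + (I x - m) := by ring
      calc |I x| = |m + (I x - m)| := by rw [← h1]
        _ ≤ |m| + |I x - m| := abs_add_le _ _
        _ ≤ B0 + B2 + M := by linarith
    have hexpr : g x * I x * I x
        - (4 * ρ^2 * (g x)^3 + 4 * ρ^4 / 3 * ((g x)^2 * iteratedDeriv 2 g x))
        = g x * ((I x - m) * (I x + m)) + ρ^6/9 * g x * (iteratedDeriv 2 g x)^2 := by
      rw [hm]; ring
    rw [Real.norm_eq_abs, hexpr]
    have hIm : |I x + m| ≤ 2*(B0+B2) + M := by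
      have := abs_add_le (I x) m
      linarith
    have hA : |g x * ((I x - m) * (I x + m))|
        ≤ B0 * ((M/60 * ρ^5) * (2*(B0+B2) + M)) := by
      rw [abs_mul, abs_mul]
      have hK0 : (0:ℝ) ≤ M/60 * ρ^5 := by
        have := pow_nonneg hρ0 5
        nlinarith
      have h1 : |I x - m| * |I x + m| ≤ (M/60 * ρ^5) * (2*(B0+B2) + M) :=
        mul_le_mul heb hIm (abs_nonneg _) hK0
      exact mul_le_mul (hB0 x) h1 (mul_nonneg (abs_nonneg _) (abs_nonneg _)) hB00
    have hBt : |ρ^6/9 * g x * (iteratedDeriv 2 g x)^2| ≤ ρ^5 * (B0 * B2^2) := by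
      rw [abs_mul, abs_mul, abs_pow, abs_of_nonneg (show (0:ℝ) ≤ ρ^6/9 by positivity)]
      have hρ6 : ρ^6/9 ≤ ρ^5 := by nlinarith [pow_nonneg hρ0 5]
      have hg2sq : |iteratedDeriv 2 g x|^2 ≤ B2^2 :=
        pow_le_pow_left₀ (abs_nonneg _) (hB2 x) 2
      have h1 : ρ^6/9 * |g x| ≤ ρ^5 * B0 :=
        mul_le_mul hρ6 (hB0 x) (abs_nonneg _) (pow_nonneg hρ0 5)
      calc ρ^6/9 * |g x| * |iteratedDeriv 2 g x|^2 ≤ (ρ^5 * B0) * B2^2 :=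
            mul_le_mul h1 hg2sq (sq_nonneg _) (mul_nonneg (pow_nonneg hρ0 5) hB00)
        _ = ρ^5 * (B0 * B2^2) := by ring
    calc |g x * ((I x - m) * (I x + m)) + ρ^6/9 * g x * (iteratedDeriv 2 g x)^2|
        ≤ |g x * ((I x - m) * (I x + m))| + |ρ^6/9 * g x * (iteratedDeriv 2 g x)^2| :=
          abs_add_le _ _
      _ ≤ B0 * ((M/60 * ρ^5) * (2*(B0+B2) + M)) + ρ^5 * (B0 * B2^2) := by linarith
      _ = Cp * ρ^5 := by rw [hCp]; ring
  have hnorm := intervalIntegral.norm_integral_le_of_norm_le_const hbnd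
  rw [Real.norm_eq_abs] at hnorm
  have h01 : |(1:ℝ) - 0| = 1 := by norm_num
  rw [h01, mul_one] at hnorm
  have hρ5n : (0:ℝ) ≤ ρ^5 := pow_nonneg hρ0 5
  calc |∫ x in (0:ℝ)..1, (g x * I x * I x
          - (4 * ρ^2 * (g x)^3 + 4 * ρ^4 / 3 * ((g x)^2 * iteratedDeriv 2 g x)))|
      ≤ Cp * ρ^5 := hnorm
    _ ≤ (Cp + 1) * ρ^5 := by nlinarith
end
end

section
/- Let μ_n = E[A_{12} A_{13} A_{23}] / E[A_{12} A_{13}], h(X_1,X_2,X_3) = A_{12}A_{13}A_{23} − (μ_n/3)(A_{12}A_{13} + A_{12}A_{23} + A_{13}A_{23}), and h_2(x,y) = E[h(X_1,X_2,X_3) | X_1 = x, X_2 = y]. Then E[h_2(X_1,X_2)^2] = Θ(r_n^3); that is, there exist constants 0 < c_1 ≤ c_2 and N such that for all n ≥ N, c_1 r_n^3 ≤ E[h_2(X_1,X_2)^2] ≤ c_2 r_n^3. -/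
open MeasureTheory ProbabilityTheory Filter Finset

noncomputable section

namespace Stmt16Aux

lemma integrable_bdd_supp (F : ℝ → ℝ) (hF : Measurable F) (C : ℝ)
    (hC : ∀ z, |F z| ≤ C) (hsupp : ∀ z, z ∉ Set.Icc (0:ℝ) 1 → F z = 0) :
    Integrable F := by
  have hFe : F = Set.indicator (Set.Icc (0:ℝ) 1) F := by
    funext z; by_cases hz : z ∈ Set.Icc (0:ℝ) 1
    · rw [Set.indicator_of_mem hz]
    · rw [Set.indicator_of_notMem hz, hsupp z hz]
  rw [hFe, integrable_indicator_iff measurableSet_Icc]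
  refine Measure.integrableOn_of_bounded (M := C) ?_ hF.aestronglyMeasurable ?_
  · simp [Real.volume_Icc]
  · exact Filter.Eventually.of_forall fun z => by simpa using hC z

lemma lower_int (a b κ : ℝ) (hab : a ≤ b) (F : ℝ → ℝ) (hFi : Integrable F)
    (hF0 : ∀ z, 0 ≤ F z) (hκ : ∀ z ∈ Set.Icc a b, κ ≤ F z) :
    κ * (b - a) ≤ ∫ z, F z := by
  have h1 : κ * (b - a) ≤ ∫ z in Set.Icc a b, F z := by
    have h2 := setIntegral_ge_of_const_le (μ := volume) measurableSet_Icc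
      (by simp [Real.volume_Icc]) hκ hFi.integrableOn
    rwa [Real.volume_real_Icc_of_le hab, smul_eq_mul, mul_comm] at h2
  exact h1.trans (setIntegral_le_integral hFi (Filter.Eventually.of_forall hF0))

lemma int_indicator_Icc (a b κ : ℝ) (hab : a ≤ b) :
    ∫ z, Set.indicator (Set.Icc a b) (fun _ => κ) z = κ * (b - a) := by
  rw [integral_indicator_const κ measurableSet_Icc, Real.volume_real_Icc_of_le hab]
  simp [mul_comm]

lemma integrable_ind (a b κ : ℝ) : Integrable (Set.indicator (Set.Icc a b) fun _ => κ) := by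
  rw [integrable_indicator_iff measurableSet_Icc]
  exact integrableOn_const (by simp [Real.volume_Icc])

lemma tri (r x y z : ℝ) (hx : x ∈ Set.Icc (0:ℝ) 1) (hy : y ∈ Set.Icc (0:ℝ) 1)
    (hz : z ∈ Set.Icc (0:ℝ) 1) (hxz : min |x - z| (1 - |x - z|) ≤ r)
    (hyz : min |y - z| (1 - |y - z|) ≤ r) :
    min |x - y| (1 - |x - y|) ≤ 2 * r := by
  obtain ⟨hx0, hx1⟩ := hx; obtain ⟨hy0, hy1⟩ := hy; obtain ⟨hz0, hz1⟩ := hz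
  rw [min_le_iff] at hxz hyz ⊢
  rcases hxz with h1 | h1 <;> rcases hyz with h2 | h2
  · left
    have e := abs_sub_le x z y
    have e2 : |z - y| = |y - z| := abs_sub_comm z y
    linarith
  · right
    have e := abs_sub_le y x z
    have e2 : |y - x| = |x - y| := abs_sub_comm y x
    linarith
  · right
    have e := abs_sub_le x y z
    linarith
  · rcases abs_cases (x - z) with ⟨e1, _⟩ | ⟨e1, _⟩ <;>
      rcases abs_cases (y - z) with ⟨e2, _⟩ | ⟨e2, _⟩
    · left
      have h3 : |x - y| ≤ r := abs_le.mpr ⟨by linarith, by linarith⟩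
      have hr0 : 0 ≤ r := by linarith
      linarith
    · right
      have := le_abs_self (x - y)
      linarith
    · right
      have := neg_abs_le (x - y)
      linarith
    · left
      have h3 : |x - y| ≤ r := abs_le.mpr ⟨by linarith, by linarith⟩
      have hr0 : 0 ≤ r := by linarith
      linarith

end Stmt16Aux
set_option maxHeartbeats 2000000 in
theorem stmt16
    (r : ℕ → ℝ) (hr : ∀ n, r n ∈ Set.Icc (0:ℝ) (1/2))
    (hr0 : Filter.Tendsto r Filter.atTop (nhds 0))
    (g : ℝ → ℝ) (hgper : Function.Periodic g 1)
    (hgpos : ∃ c > 0, ∀ x, c ≤ g x)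
    (hgsmooth : ContDiff ℝ 4 g)
    (hgbd : ∃ M, ∀ x, |iteratedDeriv 4 g x| ≤ M)
    (f : ℝ → ℝ) (hf : f = Set.indicator (Set.Icc 0 1) g)
    (hdens : ∫ x, f x = 1)
    (adj : ℕ → ℝ → ℝ → ℝ)
    (hadj : ∀ n x y, adj n x y = if min |x - y| (1 - |x - y|) ≤ r n then (1:ℝ) else 0)
    (μn : ℕ → ℝ)
    (hμn : ∀ n, μn n =
      (∫ x, ∫ y, ∫ z, adj n x y * adj n x z * adj n y z * (f x * f y * f z)) /
      (∫ x, ∫ y, ∫ z, adj n x y * adj n x z * (f x * f y * f z)))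
    (h : ℕ → ℝ → ℝ → ℝ → ℝ)
    (hh : ∀ n x y z, h n x y z = adj n x y * adj n x z * adj n y z
      - μn n / 3 * (adj n x y * adj n x z + adj n x y * adj n y z + adj n x z * adj n y z))
    (h2 : ℕ → ℝ → ℝ → ℝ)
    (hh2 : ∀ n x y, h2 n x y = ∫ z, h n x y z * f z)
    :
    ∃ c1 c2 : ℝ, 0 < c1 ∧ c1 ≤ c2 ∧ ∃ N : ℕ, ∀ n ≥ N,
      c1 * (r n)^3 ≤ (∫ x, ∫ y, (h2 n x y)^2 * (f x * f y)) ∧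
      (∫ x, ∫ y, (h2 n x y)^2 * (f x * f y)) ≤ c2 * (r n)^3 := by
  classical
  obtain ⟨c, hc0, hgc⟩ := hgpos
  have hgcont : Continuous g := hgsmooth.continuous
  obtain ⟨xm, hxm, hmax⟩ := isCompact_Icc.exists_isMaxOn (s := Set.Icc (0:ℝ) 1)
    ⟨0, by norm_num⟩ hgcont.continuousOn
  set G := g xm with hGdef
  have hGc : c ≤ G := hgc xm
  have hG0 : 0 < G := lt_of_lt_of_le hc0 hGc
  have hgleG : ∀ x ∈ Set.Icc (0:ℝ) 1, g x ≤ G := fun x hx => hmax hx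
  -- facts about f
  have hfmeas : Measurable f := by
    rw [hf]; exact hgcont.measurable.indicator measurableSet_Icc
  have hf0 : ∀ x, 0 ≤ f x := by
    intro x; rw [hf]
    by_cases hx : x ∈ Set.Icc (0:ℝ) 1
    · rw [Set.indicator_of_mem hx]; exact (lt_of_lt_of_le hc0 (hgc x)).le
    · rw [Set.indicator_of_notMem hx]
  have hfG : ∀ x, f x ≤ G := by
    intro x; rw [hf]
    by_cases hx : x ∈ Set.Icc (0:ℝ) 1
    · rw [Set.indicator_of_mem hx]; exact hgleG x hx
    · rw [Set.indicator_of_notMem hx]; exact hG0.le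
  have hfsupp : ∀ z, z ∉ Set.Icc (0:ℝ) 1 → f z = 0 := fun z hz => by
    rw [hf, Set.indicator_of_notMem hz]
  have hfc : ∀ x ∈ Set.Icc (0:ℝ) 1, c ≤ f x := fun x hx => by
    rw [hf, Set.indicator_of_mem hx]; exact hgc x
  have hfint : Integrable f := Stmt16Aux.integrable_bdd_supp f hfmeas G
    (fun z => by rw [abs_of_nonneg (hf0 z)]; exact hfG z) hfsupp
  -- facts about adj
  have hadj01 : ∀ n x y, adj n x y = 0 ∨ adj n x y = 1 := by
    intro n x y; rw [hadj]; split
    · right; rfl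
    · left; rfl
  have hadj_nonneg : ∀ n x y, 0 ≤ adj n x y := by
    intro n x y; rcases hadj01 n x y with h0 | h0 <;> rw [h0] <;> norm_num
  have hadj_le1 : ∀ n x y, adj n x y ≤ 1 := by
    intro n x y; rcases hadj01 n x y with h0 | h1
    · rw [h0]; norm_num
    · rw [h1]
  have hadj_one : ∀ n x y, min |x - y| (1 - |x - y|) ≤ r n → adj n x y = 1 :=
    fun n x y hd => by rw [hadj, if_pos hd]
  have hadj_zero : ∀ n x y, ¬ (min |x - y| (1 - |x - y|) ≤ r n) → adj n x y = 0 :=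
    fun n x y hd => by rw [hadj, if_neg hd]
  have hadj_cond : ∀ n x y, adj n x y ≠ 0 → min |x - y| (1 - |x - y|) ≤ r n := by
    intro n x y hne; by_contra hlt; exact hne (hadj_zero n x y hlt)
  have hadjmeas : ∀ n, Measurable (fun q : ℝ × ℝ => adj n q.1 q.2) := by
    intro n
    have he : (fun q : ℝ × ℝ => adj n q.1 q.2)
        = fun q => if min |q.1 - q.2| (1 - |q.1 - q.2|) ≤ r n then (1:ℝ) else 0 :=
      funext fun q => hadj n q.1 q.2
    rw [he]
    have hcont : Continuous fun q : ℝ × ℝ => min |q.1 - q.2| (1 - |q.1 - q.2|) :=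
      ((continuous_fst.sub continuous_snd).abs).min
        (continuous_const.sub (continuous_fst.sub continuous_snd).abs)
    exact Measurable.ite ((isClosed_le hcont continuous_const).measurableSet)
      measurable_const measurable_const
  have hadjz : ∀ n x, Measurable (fun z => adj n x z) := fun n x =>
    (hadjmeas n).comp (measurable_const.prodMk measurable_id)
  -- generic integrability
  have hIntMulF : ∀ φ : ℝ → ℝ, Measurable φ → (∀ z, |φ z| ≤ 1) →
      Integrable (fun z => φ z * f z) := by
    intro φ hm hb
    refine Stmt16Aux.integrable_bdd_supp _ (hm.mul hfmeas) G (fun z => ?_)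
      (fun z hz => by rw [hfsupp z hz, mul_zero])
    rw [abs_mul]
    calc |φ z| * |f z| ≤ 1 * G := by
          refine mul_le_mul (hb z) ?_ (abs_nonneg _) zero_le_one
          rw [abs_of_nonneg (hf0 z)]; exact hfG z
    _ = G := one_mul G
  -- p and w
  set p : ℕ → ℝ → ℝ := fun n x => ∫ z, adj n x z * f z with hpdef
  set w : ℕ → ℝ → ℝ → ℝ := fun n x y => ∫ z, adj n x z * adj n y z * f z with hwdef
  have habs01 : ∀ a b : ℝ, 0 ≤ a → a ≤ 1 → 0 ≤ b → b ≤ 1 → |a * b| ≤ 1 := by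
    intro a b h1 h2 h3 h4
    rw [abs_of_nonneg (mul_nonneg h1 h3)]
    nlinarith
  have hp_int : ∀ n x, Integrable (fun z => adj n x z * f z) := fun n x =>
    hIntMulF _ (hadjz n x) (fun z => by
      rw [abs_of_nonneg (hadj_nonneg n x z)]; exact hadj_le1 n x z)
  have hpw_int : ∀ n x y, Integrable (fun z => adj n x z * adj n y z * f z) := fun n x y =>
    hIntMulF _ ((hadjz n x).mul (hadjz n y)) (fun z =>
      habs01 _ _ (hadj_nonneg n x z) (hadj_le1 n x z) (hadj_nonneg n y z) (hadj_le1 n y z))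
  have hp0 : ∀ n x, 0 ≤ p n x := fun n x =>
    integral_nonneg fun z => mul_nonneg (hadj_nonneg n x z) (hf0 z)
  have hp1 : ∀ n x, p n x ≤ 1 := by
    intro n x
    have hm := integral_mono (hp_int n x) hfint (fun z => by
      nlinarith [hadj_le1 n x z, hadj_nonneg n x z, hf0 z])
    rw [hdens] at hm
    exact hm
  have hw0 : ∀ n x y, 0 ≤ w n x y := fun n x y =>
    integral_nonneg fun z => mul_nonneg
      (mul_nonneg (hadj_nonneg n x z) (hadj_nonneg n y z)) (hf0 z)
  have hw_le_p : ∀ n x y, w n x y ≤ p n x := by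
    intro n x y
    exact integral_mono (hpw_int n x y) (hp_int n x) (fun z => by
      nlinarith [mul_nonneg (mul_nonneg (hadj_nonneg n x z) (hf0 z))
        (sub_nonneg.mpr (hadj_le1 n y z))])
  have hw1 : ∀ n x y, w n x y ≤ 1 := fun n x y => (hw_le_p n x y).trans (hp1 n x)
  have hpmeas : ∀ n, Measurable (p n) := by
    intro n
    have hjm : StronglyMeasurable (fun q : ℝ × ℝ => adj n q.1 q.2 * f q.2) :=
      ((hadjmeas n).mul (hfmeas.comp measurable_snd)).stronglyMeasurable
    exact hjm.integral_prod_right'.measurable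
  have hwmeas : ∀ n, Measurable (fun q : ℝ × ℝ => w n q.1 q.2) := by
    intro n
    have hjm : StronglyMeasurable
        (fun t : (ℝ × ℝ) × ℝ => adj n t.1.1 t.2 * adj n t.1.2 t.2 * f t.2) := by
      apply Measurable.stronglyMeasurable
      exact (((hadjmeas n).comp (measurable_fst.fst.prodMk measurable_snd)).mul
        ((hadjmeas n).comp (measurable_fst.snd.prodMk measurable_snd))).mul
        (hfmeas.comp measurable_snd)
    exact hjm.integral_prod_right'.measurable
  -- identity for h2
  have hid : ∀ n x y, h2 n x y = adj n x y * w n x y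
      - μn n / 3 * (adj n x y * p n x + adj n x y * p n y + w n x y) := by
    intro n x y
    have i1 : Integrable (fun z => adj n x z * adj n y z * f z) := hpw_int n x y
    have i2 : Integrable (fun z => adj n x z * f z) := hp_int n x
    have i3 : Integrable (fun z => adj n y z * f z) := hp_int n y
    rw [hh2]
    have e1 : (fun z => h n x y z * f z) = fun z =>
        adj n x y * (adj n x z * adj n y z * f z)
        - μn n / 3 * (adj n x y * (adj n x z * f z)
          + (adj n x y * (adj n y z * f z) + adj n x z * adj n y z * f z)) := by
      funext z; rw [hh]; ring
    have iA : Integrable (fun z => adj n x y * (adj n x z * adj n y z * f z)) := i1.const_mul _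
    have iB1 : Integrable (fun z => adj n x y * (adj n x z * f z)) := i2.const_mul _
    have iB2 : Integrable (fun z => adj n x y * (adj n y z * f z)) := i3.const_mul _
    have iB23 : Integrable (fun z => adj n x y * (adj n y z * f z)
      + adj n x z * adj n y z * f z) := iB2.add i1
    have iB : Integrable (fun z => adj n x y * (adj n x z * f z)
      + (adj n x y * (adj n y z * f z) + adj n x z * adj n y z * f z)) := iB1.add iB23
    have iBc : Integrable (fun z => μn n / 3 * (adj n x y * (adj n x z * f z)
      + (adj n x y * (adj n y z * f z) + adj n x z * adj n y z * f z))) := iB.const_mul _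
    rw [e1, integral_sub iA iBc, integral_const_mul, integral_const_mul,
      integral_add iB1 iB23, integral_add iB2 i1, integral_const_mul, integral_const_mul]
    simp only [hpdef, hwdef]
    ring
  -- rewriting numerator and denominator of μn
  have hNum : ∀ n, (∫ x, ∫ y, ∫ z, adj n x y * adj n x z * adj n y z * (f x * f y * f z))
      = ∫ x, f x * ∫ y, adj n x y * w n x y * f y := by
    intro n
    refine integral_congr_ae (Filter.Eventually.of_forall fun x => ?_)
    have e1 : ∀ y, (∫ z, adj n x y * adj n x z * adj n y z * (f x * f y * f z))
        = f x * (adj n x y * w n x y * f y) := by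
      intro y
      have e : (fun z => adj n x y * adj n x z * adj n y z * (f x * f y * f z))
          = fun z => (adj n x y * (f x * f y)) * (adj n x z * adj n y z * f z) := by
        funext z; ring
      rw [e, integral_const_mul]
      simp only [hwdef]
      ring
    simp only [e1]
    exact integral_const_mul _ _
  have hDen : ∀ n, (∫ x, ∫ y, ∫ z, adj n x y * adj n x z * (f x * f y * f z))
      = ∫ x, f x * (p n x * p n x) := by
    intro n
    refine integral_congr_ae (Filter.Eventually.of_forall fun x => ?_)
    have e1 : ∀ y, (∫ z, adj n x y * adj n x z * (f x * f y * f z))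
        = (f x * p n x) * (adj n x y * f y) := by
      intro y
      have e : (fun z => adj n x y * adj n x z * (f x * f y * f z))
          = fun z => (adj n x y * (f x * f y)) * (adj n x z * f z) := by
        funext z; ring
      rw [e, integral_const_mul]
      simp only [hpdef]
      ring
    simp only [e1]
    rw [integral_const_mul]
    simp only [hpdef]
    ring
  set T : ℕ → ℝ := fun n => ∫ x, f x * ∫ y, adj n x y * w n x y * f y with hTdef
  set Dn : ℕ → ℝ := fun n => ∫ x, f x * (p n x * p n x) with hDdef
  -- A-function facts
  have hwsec : ∀ n x, Measurable (fun y => w n x y) := fun n x =>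
    (hwmeas n).comp (measurable_const.prodMk measurable_id)
  have hadjsec : ∀ n x, Measurable (fun y => adj n x y) := fun n x =>
    (hadjmeas n).comp (measurable_const.prodMk measurable_id)
  have hAint : ∀ n x, Integrable (fun y => adj n x y * w n x y * f y) := by
    intro n x
    refine hIntMulF (fun y => adj n x y * w n x y) ((hadjsec n x).mul (hwsec n x)) (fun y => ?_)
    exact habs01 _ _ (hadj_nonneg n x y) (hadj_le1 n x y) (hw0 n x y) (hw1 n x y)
  have hA0 : ∀ n x, 0 ≤ ∫ y, adj n x y * w n x y * f y := fun n x =>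
    integral_nonneg fun y => mul_nonneg (mul_nonneg (hadj_nonneg n x y) (hw0 n x y)) (hf0 y)
  have hA1 : ∀ n x, (∫ y, adj n x y * w n x y * f y) ≤ 1 := by
    intro n x
    have hm := integral_mono (hAint n x) hfint (fun y => by
      nlinarith [mul_nonneg (hadj_nonneg n x y) (hf0 y), hw1 n x y, hw0 n x y,
        mul_nonneg (mul_nonneg (hadj_nonneg n x y) (hw0 n x y)) (hf0 y), hf0 y,
        hadj_le1 n x y,
        mul_nonneg (mul_nonneg (sub_nonneg.mpr (hadj_le1 n x y)) (hw0 n x y)) (hf0 y),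
        mul_nonneg (hf0 y) (sub_nonneg.mpr (hw1 n x y))])
    rwa [hdens] at hm
  have hAmeas : ∀ n, Measurable (fun x => ∫ y, adj n x y * w n x y * f y) := by
    intro n
    have hjm : StronglyMeasurable (fun q : ℝ × ℝ => adj n q.1 q.2 * w n q.1 q.2 * f q.2) :=
      (((hadjmeas n).mul (hwmeas n)).mul (hfmeas.comp measurable_snd)).stronglyMeasurable
    exact hjm.integral_prod_right'.measurable
  have hTint : ∀ n, Integrable (fun x => f x * ∫ y, adj n x y * w n x y * f y) := by
    intro n
    refine Stmt16Aux.integrable_bdd_supp _ (hfmeas.mul (hAmeas n)) G (fun x => ?_)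
      (fun x hx => by rw [hfsupp x hx, zero_mul])
    rw [abs_of_nonneg (mul_nonneg (hf0 x) (hA0 n x))]
    calc f x * ∫ y, adj n x y * w n x y * f y ≤ G * 1 :=
      mul_le_mul (hfG x) (hA1 n x) (hA0 n x) hG0.le
    _ = G := mul_one G
  have hDint : ∀ n, Integrable (fun x => f x * (p n x * p n x)) := by
    intro n
    refine Stmt16Aux.integrable_bdd_supp _ (hfmeas.mul ((hpmeas n).mul (hpmeas n))) G
      (fun x => ?_) (fun x hx => by rw [hfsupp x hx, zero_mul])
    have hpp : p n x * p n x ≤ 1 := by nlinarith [hp0 n x, hp1 n x]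
    rw [abs_of_nonneg (mul_nonneg (hf0 x) (mul_nonneg (hp0 n x) (hp0 n x)))]
    calc f x * (p n x * p n x) ≤ G * 1 :=
      mul_le_mul (hfG x) hpp (mul_nonneg (hp0 n x) (hp0 n x)) hG0.le
    _ = G := mul_one G
  have hμeq : ∀ n, μn n = T n / Dn n := by
    intro n
    rw [hμn n, hNum n, hDen n]
  have hT0 : ∀ n, 0 ≤ T n := by
    intro n
    simp only [hTdef]
    exact integral_nonneg fun x => mul_nonneg (hf0 x) (hA0 n x)
  have hD0 : ∀ n, 0 ≤ Dn n := by
    intro n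
    simp only [hDdef]
    exact integral_nonneg fun x => mul_nonneg (hf0 x) (mul_nonneg (hp0 n x) (hp0 n x))
  have hTleD : ∀ n, T n ≤ Dn n := by
    intro n
    simp only [hTdef, hDdef]
    refine integral_mono (hTint n) (hDint n) (fun x => ?_)
    have hpx_int : Integrable (fun y => adj n x y * p n x * f y) := by
      refine hIntMulF (fun y => adj n x y * p n x) ((hadjsec n x).mul_const _) (fun y => ?_)
      exact habs01 _ _ (hadj_nonneg n x y) (hadj_le1 n x y) (hp0 n x) (hp1 n x)
    have h1 : (∫ y, adj n x y * w n x y * f y) ≤ ∫ y, adj n x y * p n x * f y := by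
      refine integral_mono (hAint n x) hpx_int (fun y => ?_)
      nlinarith [mul_nonneg (hadj_nonneg n x y) (hf0 y), hw_le_p n x y]
    have h2' : (∫ y, adj n x y * p n x * f y) = p n x * p n x := by
      have e : (fun y => adj n x y * p n x * f y) = fun y => p n x * (adj n x y * f y) := by
        funext y; ring
      rw [e, integral_const_mul]
    exact mul_le_mul_of_nonneg_left (le_of_le_of_eq (h1.trans h2'.le) rfl) (hf0 x)
  have hμ0 : ∀ n, 0 ≤ μn n := fun n => by
    rw [hμeq n]; exact div_nonneg (hT0 n) (hD0 n)
  have hμ1 : ∀ n, μn n ≤ 1 := by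
    intro n
    rw [hμeq n]
    rcases eq_or_lt_of_le (hD0 n) with hD | hD
    · rw [← hD, div_zero]; norm_num
    · exact (div_le_one hD).mpr (hTleD n)
  -- upper bound for p on [0,1]
  have hp_upper : ∀ n, ∀ x ∈ Set.Icc (0:ℝ) 1, p n x ≤ 4 * G * r n := by
    intro n x hx
    have hR0 : 0 ≤ r n := (hr n).1
    have hind : ∀ z, adj n x z * f z ≤
        Set.indicator (Set.Icc (x - r n) (x + r n)) (fun _ => G) z
        + (Set.indicator (Set.Icc (x - 1) (x - 1 + r n)) (fun _ => G) z
          + Set.indicator (Set.Icc (x + 1 - r n) (x + 1)) (fun _ => G) z) := by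
      intro z
      have hi1 : 0 ≤ Set.indicator (Set.Icc (x - r n) (x + r n)) (fun _ => G) z :=
        Set.indicator_nonneg (fun _ _ => hG0.le) z
      have hi2 : 0 ≤ Set.indicator (Set.Icc (x - 1) (x - 1 + r n)) (fun _ => G) z :=
        Set.indicator_nonneg (fun _ _ => hG0.le) z
      have hi3 : 0 ≤ Set.indicator (Set.Icc (x + 1 - r n) (x + 1)) (fun _ => G) z :=
        Set.indicator_nonneg (fun _ _ => hG0.le) z
      rcases hadj01 n x z with h0 | h1
      · rw [h0, zero_mul]; linarith
      · rw [h1, one_mul]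
        by_cases hz : z ∈ Set.Icc (0:ℝ) 1
        · have hcond := hadj_cond n x z (by rw [h1]; norm_num)
          rcases min_le_iff.mp hcond with hle | hle
          · obtain ⟨ha, hb⟩ := abs_le.mp hle
            have hz1 : z ∈ Set.Icc (x - r n) (x + r n) := ⟨by linarith, by linarith⟩
            rw [Set.indicator_of_mem hz1]
            linarith [hfG z]
          · have habs : 1 - r n ≤ |x - z| := by linarith
            rcases le_abs.mp habs with hc' | hc'
            · have hz2 : z ∈ Set.Icc (x - 1) (x - 1 + r n) :=
                ⟨by linarith [hz.1, hx.2], by linarith⟩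
              rw [Set.indicator_of_mem hz2]
              linarith [hfG z]
            · have hz3 : z ∈ Set.Icc (x + 1 - r n) (x + 1) :=
                ⟨by linarith, by linarith [hz.2, hx.1]⟩
              rw [Set.indicator_of_mem hz3]
              linarith [hfG z]
        · rw [hfsupp z hz]; linarith
    have j1 : Integrable (fun z => Set.indicator (Set.Icc (x - r n) (x + r n))
      (fun _ => G) z) := Stmt16Aux.integrable_ind _ _ _
    have j2 : Integrable (fun z => Set.indicator (Set.Icc (x - 1) (x - 1 + r n))
      (fun _ => G) z) := Stmt16Aux.integrable_ind _ _ _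
    have j3 : Integrable (fun z => Set.indicator (Set.Icc (x + 1 - r n) (x + 1))
      (fun _ => G) z) := Stmt16Aux.integrable_ind _ _ _
    have j23 : Integrable (fun z => Set.indicator (Set.Icc (x - 1) (x - 1 + r n))
        (fun _ => G) z
      + Set.indicator (Set.Icc (x + 1 - r n) (x + 1)) (fun _ => G) z) := j2.add j3
    have hm := integral_mono (hp_int n x) (j1.add j23) hind
    simp only [Pi.add_apply] at hm
    rw [integral_add j1 j23, integral_add j2 j3,
      Stmt16Aux.int_indicator_Icc _ _ _ (by linarith),
      Stmt16Aux.int_indicator_Icc _ _ _ (by linarith),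
      Stmt16Aux.int_indicator_Icc _ _ _ (by linarith)] at hm
    have he : G * (x + r n - (x - r n)) + (G * (x - 1 + r n - (x - 1))
        + G * (x + 1 - (x + 1 - r n))) = 4 * G * r n := by ring
    calc p n x ≤ _ := hm
    _ = 4 * G * r n := he
  -- support of h2
  have hsupp2 : ∀ n, ∀ x ∈ Set.Icc (0:ℝ) 1, ∀ y ∈ Set.Icc (0:ℝ) 1,
      ¬ (min |x - y| (1 - |x - y|) ≤ 2 * r n) → h2 n x y = 0 := by
    intro n x hx y hy hd
    have hR0 : 0 ≤ r n := (hr n).1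
    have hadj0' : adj n x y = 0 := hadj_zero n x y (fun hle => hd (le_trans hle (by linarith)))
    have hw0' : w n x y = 0 := by
      have he : (fun z => adj n x z * adj n y z * f z) = fun _ => (0:ℝ) := by
        funext z
        by_cases hz : z ∈ Set.Icc (0:ℝ) 1
        · by_cases ha : adj n x z = 0
          · rw [ha]; ring
          · by_cases hb : adj n y z = 0
            · rw [hb]; ring
            · exact absurd (Stmt16Aux.tri (r n) x y z hx hy hz
                (hadj_cond n x z ha) (hadj_cond n y z hb)) hd
        · rw [hfsupp z hz]; ring
      have : w n x y = ∫ z, adj n x z * adj n y z * f z := by simp only [hwdef]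
      rw [this, he, integral_zero]
    rw [hid n x y, hadj0', hw0']
    ring
  -- global bound for h2
  have hh2glob : ∀ n x y, |h2 n x y| ≤ 1 := by
    intro n x y
    rw [hid n x y]
    have h1 : 0 ≤ adj n x y * w n x y :=
      mul_nonneg (hadj_nonneg n x y) (hw0 n x y)
    have h2' : adj n x y * w n x y ≤ 1 := by
      nlinarith [hadj_le1 n x y, hw1 n x y, hw0 n x y]
    have hs0 : 0 ≤ adj n x y * p n x + adj n x y * p n y + w n x y := by
      have := mul_nonneg (hadj_nonneg n x y) (hp0 n x)
      have := mul_nonneg (hadj_nonneg n x y) (hp0 n y)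
      linarith [hw0 n x y]
    have hs3 : adj n x y * p n x + adj n x y * p n y + w n x y ≤ 3 := by
      nlinarith [hadj_le1 n x y, hadj_nonneg n x y, hp0 n x, hp1 n x, hp0 n y, hp1 n y,
        hw1 n x y]
    have hb0 : 0 ≤ μn n / 3 * (adj n x y * p n x + adj n x y * p n y + w n x y) :=
      mul_nonneg (by linarith [hμ0 n]) hs0
    have hb1 : μn n / 3 * (adj n x y * p n x + adj n x y * p n y + w n x y) ≤ 1 := by
      nlinarith [hμ0 n, hμ1 n]
    rw [abs_le]
    constructor <;> linarith
  -- bound for h2 on the support, for x, y in [0,1]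
  have hh2b : ∀ n, ∀ x ∈ Set.Icc (0:ℝ) 1, ∀ y ∈ Set.Icc (0:ℝ) 1,
      |h2 n x y| ≤ 8 * G * r n := by
    intro n x hx y hy
    rw [hid n x y]
    have hpx := hp_upper n x hx
    have hpy := hp_upper n y hy
    have h1 : 0 ≤ adj n x y * w n x y := mul_nonneg (hadj_nonneg n x y) (hw0 n x y)
    have h2' : adj n x y * w n x y ≤ 4 * G * r n := by
      nlinarith [hadj_le1 n x y, hadj_nonneg n x y, hw0 n x y,
        (hw_le_p n x y).trans hpx]
    have hs0 : 0 ≤ adj n x y * p n x + adj n x y * p n y + w n x y := by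
      have := mul_nonneg (hadj_nonneg n x y) (hp0 n x)
      have := mul_nonneg (hadj_nonneg n x y) (hp0 n y)
      linarith [hw0 n x y]
    have hs3 : adj n x y * p n x + adj n x y * p n y + w n x y ≤ 12 * G * r n := by
      have e1 : adj n x y * p n x ≤ 4 * G * r n := by
        nlinarith [hadj_le1 n x y, hadj_nonneg n x y, hp0 n x]
      have e2 : adj n x y * p n y ≤ 4 * G * r n := by
        nlinarith [hadj_le1 n x y, hadj_nonneg n x y, hp0 n y]
      linarith [(hw_le_p n x y).trans hpx]
    have hb0 : 0 ≤ μn n / 3 * (adj n x y * p n x + adj n x y * p n y + w n x y) :=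
      mul_nonneg (by linarith [hμ0 n]) hs0
    have hb1 : μn n / 3 * (adj n x y * p n x + adj n x y * p n y + w n x y)
        ≤ 4 * G * r n := by
      nlinarith [hμ0 n, hμ1 n]
    rw [abs_le]
    constructor <;> linarith
  -- measurability of h2
  have hH3 : ∀ n, Measurable (fun t : (ℝ × ℝ) × ℝ => h n t.1.1 t.1.2 t.2) := by
    intro n
    have he : (fun t : (ℝ × ℝ) × ℝ => h n t.1.1 t.1.2 t.2)
        = fun t => adj n t.1.1 t.1.2 * adj n t.1.1 t.2 * adj n t.1.2 t.2
          - μn n / 3 * (adj n t.1.1 t.1.2 * adj n t.1.1 t.2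
            + adj n t.1.1 t.1.2 * adj n t.1.2 t.2 + adj n t.1.1 t.2 * adj n t.1.2 t.2) :=
      funext fun t => hh n t.1.1 t.1.2 t.2
    rw [he]
    have m12 : Measurable (fun t : (ℝ × ℝ) × ℝ => adj n t.1.1 t.1.2) :=
      (hadjmeas n).comp (measurable_fst.fst.prodMk measurable_fst.snd)
    have m13 : Measurable (fun t : (ℝ × ℝ) × ℝ => adj n t.1.1 t.2) :=
      (hadjmeas n).comp (measurable_fst.fst.prodMk measurable_snd)
    have m23 : Measurable (fun t : (ℝ × ℝ) × ℝ => adj n t.1.2 t.2) :=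
      (hadjmeas n).comp (measurable_fst.snd.prodMk measurable_snd)
    exact ((m12.mul m13).mul m23).sub
      ((((m12.mul m13).add (m12.mul m23)).add (m13.mul m23)).const_mul _)
  have hh2joint : ∀ n, Measurable (fun q : ℝ × ℝ => h2 n q.1 q.2) := by
    intro n
    have he : (fun q : ℝ × ℝ => h2 n q.1 q.2)
        = fun q : ℝ × ℝ => ∫ z, h n q.1 q.2 z * f z := funext fun q => hh2 n q.1 q.2
    rw [he]
    have hsm : StronglyMeasurable (fun t : (ℝ × ℝ) × ℝ => h n t.1.1 t.1.2 t.2 * f t.2) :=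
      ((hH3 n).mul (hfmeas.comp measurable_snd)).stronglyMeasurable
    exact hsm.integral_prod_right'.measurable
  have hh2sec : ∀ n x, Measurable (fun y => h2 n x y) := fun n x =>
    (hh2joint n).comp (measurable_const.prodMk measurable_id)
  have hh2sq : ∀ n x y, (h2 n x y)^2 ≤ 1 := by
    intro n x y
    have e := sq_abs (h2 n x y)
    nlinarith [hh2glob n x y, abs_nonneg (h2 n x y)]
  -- Φ facts
  have hΦint_y : ∀ n x, Integrable (fun y => (h2 n x y)^2 * (f x * f y)) := by
    intro n x
    refine Stmt16Aux.integrable_bdd_supp _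
      (((hh2sec n x).pow_const 2).mul (measurable_const.mul hfmeas)) (G * G)
      (fun y => ?_) (fun y hy => by rw [hfsupp y hy, mul_zero, mul_zero])
    rw [abs_of_nonneg (mul_nonneg (sq_nonneg _) (mul_nonneg (hf0 x) (hf0 y)))]
    calc (h2 n x y)^2 * (f x * f y) ≤ 1 * (G * G) := by
          exact mul_le_mul (hh2sq n x y) (mul_le_mul (hfG x) (hfG y) (hf0 y) hG0.le)
            (mul_nonneg (hf0 x) (hf0 y)) zero_le_one
    _ = G * G := one_mul _
  have hΦmeas : ∀ n, Measurable (fun x => ∫ y, (h2 n x y)^2 * (f x * f y)) := by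
    intro n
    have hsm : StronglyMeasurable (fun q : ℝ × ℝ => (h2 n q.1 q.2)^2 * (f q.1 * f q.2)) :=
      (((hh2joint n).pow_const 2).mul ((hfmeas.comp measurable_fst).mul
        (hfmeas.comp measurable_snd))).stronglyMeasurable
    exact hsm.integral_prod_right'.measurable
  have hΦ0 : ∀ n x, 0 ≤ ∫ y, (h2 n x y)^2 * (f x * f y) := fun n x =>
    integral_nonneg fun y => mul_nonneg (sq_nonneg _) (mul_nonneg (hf0 x) (hf0 y))
  have hΦle : ∀ n x, (∫ y, (h2 n x y)^2 * (f x * f y)) ≤ f x := by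
    intro n x
    have hptw : ∀ y, (h2 n x y)^2 * (f x * f y) ≤ f x * f y := by
      intro y
      nlinarith [mul_nonneg (hf0 x) (hf0 y), hh2sq n x y, sq_nonneg (h2 n x y)]
    have hm := integral_mono (hΦint_y n x) (hfint.const_mul (f x)) hptw
    rwa [integral_const_mul, hdens, mul_one] at hm
  have hΦint : ∀ n, Integrable (fun x => ∫ y, (h2 n x y)^2 * (f x * f y)) := by
    intro n
    refine Stmt16Aux.integrable_bdd_supp _ (hΦmeas n) G (fun x => ?_) (fun x hx => ?_)
    · rw [abs_of_nonneg (hΦ0 n x)]; exact (hΦle n x).trans (hfG x)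
    · have he : (fun y => (h2 n x y)^2 * (f x * f y)) = fun _ => (0:ℝ) := by
        funext y; rw [hfsupp x hx]; ring
      rw [he, integral_zero]
  -- lower bound for w
  have hw_lb : ∀ n x y, 0 ≤ x → x ≤ y → y ≤ x + 3 * r n / 2 → x + r n ≤ 1 →
      c * r n / 2 ≤ w n x y := by
    intro n x y hx0 hxy hy3 hx1
    have hR0 : 0 ≤ r n := (hr n).1
    have hab : max x (y - r n) ≤ x + r n := max_le (by linarith) (by linarith)
    have hkey : ∀ z ∈ Set.Icc (max x (y - r n)) (x + r n),
        c ≤ adj n x z * adj n y z * f z := by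
      intro z hz
      obtain ⟨hza, hzb⟩ := hz
      have hzx : x ≤ z := le_trans (le_max_left _ _) hza
      have hzy : y - r n ≤ z := le_trans (le_max_right _ _) hza
      have e1 : adj n x z = 1 := by
        refine hadj_one n x z (le_trans (min_le_left _ _) ?_)
        rw [abs_sub_comm, abs_of_nonneg (by linarith : (0:ℝ) ≤ z - x)]
        linarith
      have e2 : adj n y z = 1 := by
        refine hadj_one n y z (le_trans (min_le_left _ _) ?_)
        rw [abs_le]
        constructor <;> linarith
      rw [e1, e2, one_mul, one_mul]
      exact hfc z ⟨by linarith, by linarith⟩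
    have hwx : w n x y = ∫ z, adj n x z * adj n y z * f z := by simp only [hwdef]
    rw [hwx]
    have hlow := Stmt16Aux.lower_int _ _ c hab _ (hpw_int n x y)
      (fun z => mul_nonneg (mul_nonneg (hadj_nonneg n x z) (hadj_nonneg n y z)) (hf0 z)) hkey
    have hge : r n / 2 ≤ x + r n - max x (y - r n) := by
      rcases max_cases x (y - r n) with ⟨he, _⟩ | ⟨he, _⟩ <;> rw [he] <;> linarith
    have hcm := mul_le_mul_of_nonneg_left hge hc0.le
    linarith
  -- lower bound for T
  have hTlb : ∀ n, c^3 * (r n)^2 / 8 ≤ T n := by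
    intro n
    have hR0 : 0 ≤ r n := (hr n).1
    have hR2 : r n ≤ 1/2 := (hr n).2
    have hinner : ∀ x ∈ Set.Icc (0:ℝ) (1/2),
        c^2 * (r n)^2 / 4 ≤ ∫ y, adj n x y * w n x y * f y := by
      intro x hx
      have hkey : ∀ y ∈ Set.Icc x (x + r n / 2),
          (c * r n / 2) * c ≤ adj n x y * w n x y * f y := by
        intro y hy
        have e1 : adj n x y = 1 := by
          refine hadj_one n x y (le_trans (min_le_left _ _) ?_)
          rw [abs_sub_comm, abs_of_nonneg (by linarith [hy.1] : (0:ℝ) ≤ y - x)]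
          linarith [hy.2]
        have e2 : c * r n / 2 ≤ w n x y :=
          hw_lb n x y hx.1 hy.1 (by linarith [hy.2]) (by linarith [hx.2])
        have e3 : c ≤ f y := hfc y ⟨by linarith [hx.1, hy.1], by linarith [hy.2, hx.2]⟩
        rw [e1, one_mul]
        exact mul_le_mul e2 e3 hc0.le (hw0 n x y)
      have hlow := Stmt16Aux.lower_int x (x + r n / 2) _ (by linarith) _ (hAint n x)
        (fun y => mul_nonneg (mul_nonneg (hadj_nonneg n x y) (hw0 n x y)) (hf0 y)) hkey
      have he : (c * r n / 2) * c * (x + r n / 2 - x) = c^2 * (r n)^2 / 4 := by ring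
      linarith
    have hkey2 : ∀ x ∈ Set.Icc (0:ℝ) (1/2),
        c * (c^2 * (r n)^2 / 4) ≤ f x * ∫ y, adj n x y * w n x y * f y := by
      intro x hx
      refine mul_le_mul (hfc x ⟨hx.1, by linarith [hx.2]⟩) (hinner x hx) ?_ (hf0 x)
      positivity
    have hlow2 := Stmt16Aux.lower_int 0 (1/2) _ (by norm_num) _ (hTint n)
      (fun x => mul_nonneg (hf0 x) (hA0 n x)) hkey2
    have hTx : T n = ∫ x, f x * ∫ y, adj n x y * w n x y * f y := by simp only [hTdef]
    rw [hTx]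
    have he2 : c * (c^2 * (r n)^2 / 4) * (1/2 - 0) = c^3 * (r n)^2 / 8 := by ring
    linarith
  -- upper bound for Dn
  have hDub : ∀ n, Dn n ≤ 16 * G^2 * (r n)^2 := by
    intro n
    have hptw : ∀ x, f x * (p n x * p n x) ≤ 16 * G^2 * (r n)^2 * f x := by
      intro x
      by_cases hx : x ∈ Set.Icc (0:ℝ) 1
      · have e1 := hp_upper n x hx
        have e2 := hp0 n x
        have h4 : (0:ℝ) ≤ 4 * G * r n := by
          have := mul_nonneg (mul_nonneg (by norm_num : (0:ℝ) ≤ 4) hG0.le) (hr n).1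
          linarith
        have h5 := mul_le_mul e1 e1 e2 h4
        have h6 := mul_le_mul_of_nonneg_left h5 (hf0 x)
        nlinarith [h6]
      · rw [hfsupp x hx]; simp
    have hm := integral_mono (hDint n) (hfint.const_mul _) hptw
    rw [integral_const_mul, hdens, mul_one] at hm
    have hDx : Dn n = ∫ x, f x * (p n x * p n x) := by simp only [hDdef]
    rw [hDx]
    exact hm
  -- lower bound for μn
  have hμlb : ∀ n, 0 < r n → c^3 / (128 * G^2) ≤ μn n := by
    intro n hRpos
    have hDpos : 0 < Dn n := by
      nlinarith [hTlb n, hTleD n, mul_pos (pow_pos hc0 3) (mul_pos hRpos hRpos)]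
    rw [hμeq n]
    have h1 : c^3 * (r n)^2 / 8 / Dn n ≤ T n / Dn n :=
      (div_le_div_iff_of_pos_right hDpos).mpr (hTlb n)
    have h2' : c^3 / (128 * G^2) ≤ c^3 * (r n)^2 / 8 / Dn n := by
      rw [div_le_div_iff₀ (mul_pos (by norm_num : (0:ℝ) < 128) (pow_pos hG0 2)) hDpos]
      have h3 := mul_le_mul_of_nonneg_left (hDub n) (le_of_lt (pow_pos hc0 3))
      nlinarith [h3]
    linarith
  -- choose N and the constants
  obtain ⟨N, hN⟩ := Filter.eventually_atTop.mp
    (hr0.eventually_lt_const (by norm_num : (0:ℝ) < 1/3))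
  set μ0 := c^3 / (128 * G^2) with hμ0def
  have hμ0pos : 0 < μ0 := div_pos (pow_pos hc0 3)
    (mul_pos (by norm_num) (pow_pos hG0 2))
  set c1 := (μ0 * (c / 2) / 3)^2 * (c * c) * (1 / 10) with hc1def
  have hc1pos : 0 < c1 := by
    have hb : 0 < μ0 * (c / 2) / 3 := by
      have := mul_pos hμ0pos (by linarith : (0:ℝ) < c / 2)
      linarith
    have hb2 := pow_pos hb 2
    have := mul_pos (mul_pos hb2 (mul_pos hc0 hc0)) (by norm_num : (0:ℝ) < 1/10)
    linarith [hc1def ▸ this]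
  set c2 := 512 * G^4 + c1 with hc2def
  refine ⟨c1, c2, hc1pos, by nlinarith [pow_pos hG0 4], N, fun n hn => ?_⟩
  have hR0 : 0 ≤ r n := (hr n).1
  have hR3 : r n ≤ 1/3 := (hN n hn).le
  constructor
  · -- lower bound
    rcases eq_or_lt_of_le hR0 with hR | hRpos
    · have hz : c1 * (r n)^3 = 0 := by rw [← hR]; ring
      rw [hz]
      exact integral_nonneg (fun x => hΦ0 n x)
    · have hκ : ∀ x ∈ Set.Icc (0:ℝ) (1/4),
          (μ0 * (c * r n / 2) / 3)^2 * (c * c) * (2 * r n / 5)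
            ≤ ∫ y, (h2 n x y)^2 * (f x * f y) := by
        intro x hx
        have hkey : ∀ y ∈ Set.Icc (x + 11 * r n / 10) (x + 3 * r n / 2),
            (μ0 * (c * r n / 2) / 3)^2 * (c * c) ≤ (h2 n x y)^2 * (f x * f y) := by
          intro y hy
          have hy01 : y ∈ Set.Icc (0:ℝ) 1 :=
            ⟨by linarith [hx.1, hy.1], by linarith [hx.2, hy.2]⟩
          have hyx : |x - y| = y - x := by
            rw [abs_sub_comm, abs_of_nonneg (by linarith [hy.1] : (0:ℝ) ≤ y - x)]
          have hadj0' : adj n x y = 0 := by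
            apply hadj_zero
            rw [hyx, not_le]
            apply lt_min
            · linarith [hy.1]
            · linarith [hy.2]
          have hwlb : c * r n / 2 ≤ w n x y :=
            hw_lb n x y hx.1 (by linarith [hy.1]) (by linarith [hy.2]) (by linarith [hx.2])
          have hid2 : h2 n x y = -(μn n / 3 * w n x y) := by
            rw [hid n x y, hadj0']; ring
          have hbase : 0 ≤ μ0 * (c * r n / 2) / 3 := by
            have h9 : (0:ℝ) ≤ c * r n / 2 := by
              have := mul_nonneg hc0.le hR0; linarith
            have := mul_nonneg hμ0pos.le h9
            linarith
          have hmono : μ0 * (c * r n / 2) / 3 ≤ μn n / 3 * w n x y := by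
            have h9 : (0:ℝ) ≤ c * r n / 2 := by
              have := mul_nonneg hc0.le hR0; linarith
            have hmm := mul_le_mul (hμlb n hRpos) hwlb h9 (hμ0 n)
            linarith
          have hsq : (μ0 * (c * r n / 2) / 3)^2 ≤ (h2 n x y)^2 := by
            rw [hid2]
            have hneg : (-(μn n / 3 * w n x y))^2 = (μn n / 3 * w n x y)^2 := by ring
            rw [hneg]
            exact pow_le_pow_left₀ hbase hmono 2
          have hff : c * c ≤ f x * f y :=
            mul_le_mul (hfc x ⟨hx.1, by linarith [hx.2]⟩) (hfc y hy01) hc0.le (hf0 x)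
          exact mul_le_mul hsq hff (mul_nonneg hc0.le hc0.le) (sq_nonneg _)
        have hlow := Stmt16Aux.lower_int _ _ _ (by linarith) _ (hΦint_y n x)
          (fun y => mul_nonneg (sq_nonneg _) (mul_nonneg (hf0 x) (hf0 y))) hkey
        have he : (μ0 * (c * r n / 2) / 3)^2 * (c * c)
            * (x + 3 * r n / 2 - (x + 11 * r n / 10))
            = (μ0 * (c * r n / 2) / 3)^2 * (c * c) * (2 * r n / 5) := by ring
        linarith
      have hlow2 := Stmt16Aux.lower_int 0 (1/4) _ (by norm_num) _ (hΦint n) (hΦ0 n) hκ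
      have he2 : (μ0 * (c * r n / 2) / 3)^2 * (c * c) * (2 * r n / 5) * (1/4 - 0)
          = c1 * (r n)^3 := by rw [hc1def]; ring
      linarith
  · -- upper bound
    have hκ2 : ∀ x, (∫ y, (h2 n x y)^2 * (f x * f y))
        ≤ Set.indicator (Set.Icc (0:ℝ) 1) (fun _ => 512 * G^4 * (r n)^3) x := by
      intro x
      by_cases hx : x ∈ Set.Icc (0:ℝ) 1
      · rw [Set.indicator_of_mem hx]
        have hκ0 : (0:ℝ) ≤ 64 * G^4 * (r n)^2 := by
          have := pow_pos hG0 4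
          nlinarith [sq_nonneg (r n)]
        have hptw : ∀ y, (h2 n x y)^2 * (f x * f y) ≤
            Set.indicator (Set.Icc (x - 2*r n) (x + 2*r n)) (fun _ => 64 * G^4 * (r n)^2) y
            + (Set.indicator (Set.Icc (x - 1) (x - 1 + 2*r n)) (fun _ => 64 * G^4 * (r n)^2) y
              + Set.indicator (Set.Icc (x + 1 - 2*r n) (x + 1)) (fun _ => 64 * G^4 * (r n)^2) y) := by
          intro y
          have hi1 : 0 ≤ Set.indicator (Set.Icc (x - 2*r n) (x + 2*r n))
              (fun _ => 64 * G^4 * (r n)^2) y := Set.indicator_nonneg (fun _ _ => hκ0) y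
          have hi2 : 0 ≤ Set.indicator (Set.Icc (x - 1) (x - 1 + 2*r n))
              (fun _ => 64 * G^4 * (r n)^2) y := Set.indicator_nonneg (fun _ _ => hκ0) y
          have hi3 : 0 ≤ Set.indicator (Set.Icc (x + 1 - 2*r n) (x + 1))
              (fun _ => 64 * G^4 * (r n)^2) y := Set.indicator_nonneg (fun _ _ => hκ0) y
          by_cases hy : y ∈ Set.Icc (0:ℝ) 1
          · by_cases hd : min |x - y| (1 - |x - y|) ≤ 2 * r n
            · have hb := hh2b n x hx y hy
              have hsq : (h2 n x y)^2 ≤ (8 * G * r n)^2 := by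
                have e := sq_abs (h2 n x y)
                nlinarith [abs_nonneg (h2 n x y)]
              have hbd : (h2 n x y)^2 * (f x * f y) ≤ 64 * G^4 * (r n)^2 := by
                have hffG : f x * f y ≤ G * G :=
                  mul_le_mul (hfG x) (hfG y) (hf0 y) hG0.le
                have hmm := mul_le_mul hsq hffG (mul_nonneg (hf0 x) (hf0 y)) (sq_nonneg _)
                nlinarith [hmm]
              rcases min_le_iff.mp hd with hle | hle
              · obtain ⟨ha, hb2⟩ := abs_le.mp hle
                have hmem : y ∈ Set.Icc (x - 2*r n) (x + 2*r n) :=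
                  Set.mem_Icc.mpr ⟨by linarith, by linarith⟩
                rw [Set.indicator_of_mem hmem]
                linarith
              · have habs : 1 - 2 * r n ≤ |x - y| := by linarith
                rcases le_abs.mp habs with hc' | hc'
                · have hmem : y ∈ Set.Icc (x-1) (x-1+2*r n) :=
                    Set.mem_Icc.mpr ⟨by linarith [hy.1, hx.2], by linarith⟩
                  rw [Set.indicator_of_mem hmem]
                  linarith
                · have hmem : y ∈ Set.Icc (x+1-2*r n) (x+1) :=
                    Set.mem_Icc.mpr ⟨by linarith, by linarith [hy.2, hx.1]⟩
                  rw [Set.indicator_of_mem hmem]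
                  linarith
            · rw [hsupp2 n x hx y hy hd]
              have hz : (0:ℝ)^2 * (f x * f y) = 0 := by ring
              rw [hz]
              linarith
          · rw [hfsupp y hy]
            have hz : (h2 n x y)^2 * (f x * 0) = 0 := by ring
            rw [hz]
            linarith
        have j1 : Integrable (fun y => Set.indicator (Set.Icc (x - 2*r n) (x + 2*r n))
          (fun _ => 64 * G^4 * (r n)^2) y) := Stmt16Aux.integrable_ind _ _ _
        have j2 : Integrable (fun y => Set.indicator (Set.Icc (x - 1) (x - 1 + 2*r n))
          (fun _ => 64 * G^4 * (r n)^2) y) := Stmt16Aux.integrable_ind _ _ _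
        have j3 : Integrable (fun y => Set.indicator (Set.Icc (x + 1 - 2*r n) (x + 1))
          (fun _ => 64 * G^4 * (r n)^2) y) := Stmt16Aux.integrable_ind _ _ _
        have j23 : Integrable (fun y => Set.indicator (Set.Icc (x - 1) (x - 1 + 2*r n))
            (fun _ => 64 * G^4 * (r n)^2) y
          + Set.indicator (Set.Icc (x + 1 - 2*r n) (x + 1))
            (fun _ => 64 * G^4 * (r n)^2) y) := j2.add j3
        have hm := integral_mono (hΦint_y n x) (j1.add j23) hptw
        simp only [Pi.add_apply] at hm
        rw [integral_add j1 j23, integral_add j2 j3,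
          Stmt16Aux.int_indicator_Icc _ _ _ (by linarith),
          Stmt16Aux.int_indicator_Icc _ _ _ (by linarith),
          Stmt16Aux.int_indicator_Icc _ _ _ (by linarith)] at hm
        have he : 64 * G^4 * (r n)^2 * (x + 2*r n - (x - 2*r n))
            + (64 * G^4 * (r n)^2 * (x - 1 + 2*r n - (x - 1))
              + 64 * G^4 * (r n)^2 * (x + 1 - (x + 1 - 2*r n))) = 512 * G^4 * (r n)^3 := by
          ring
        linarith
      · rw [Set.indicator_of_notMem hx]
        have he : (fun y => (h2 n x y)^2 * (f x * f y)) = fun _ => (0:ℝ) := by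
          funext y; rw [hfsupp x hx]; ring
        rw [he, integral_zero]
    have hm2 := integral_mono (hΦint n) (Stmt16Aux.integrable_ind 0 1 _) hκ2
    rw [Stmt16Aux.int_indicator_Icc _ _ _ (by norm_num : (0:ℝ) ≤ 1)] at hm2
    have hc1R : 0 ≤ c1 * (r n)^3 := by
      have h9 : (0:ℝ) ≤ (r n)^3 := pow_nonneg hR0 3
      nlinarith [hc1pos.le]
    have he2 : 512 * G^4 * (r n)^3 * (1 - 0) + c1 * (r n)^3 = c2 * (r n)^3 := by
      rw [hc2def]; ring
    linarith
end
end
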